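/- arXiv:1810.11850 — 7 statements merged into one kernel-verified Lean document; each statement's English description precedes it below -/
import Mathlib

section
/- Let T > 0 and let γ satisfy property (⋆) with exponent δ ∈ [0,2). Then γ is interval-integrable on (0,T); in particular, for every k ∈ ℕ the Fourier coefficient c_k(γ) = (2/T)·∫₀^T γ(t)·cos(kπt/T) dt is well defined (the function t ↦ γ(t)·cos(kπt/T) is interval-integrable on (0,T)). -/
open MeasureTheory Real Filter Set intervalIntegral

/-- Property (⋆): `γ` is continuously differentiable (with derivative `γ'`), increasing and
concave on `(0, T]`, and `x ^ δ * γ' x` is nonnegative and bounded near `0⁺`. -/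
def PropertyStar (T δ : ℝ) (γ γ' : ℝ → ℝ) : Prop :=
  (∀ x ∈ Set.Ioc (0 : ℝ) T, HasDerivWithinAt γ (γ' x) (Set.Ioc (0 : ℝ) T) x) ∧
  ContinuousOn γ' (Set.Ioc (0 : ℝ) T) ∧
  MonotoneOn γ (Set.Ioc (0 : ℝ) T) ∧
  ConcaveOn ℝ (Set.Ioc (0 : ℝ) T) γ ∧
  ∃ M > (0 : ℝ), ∃ ε > (0 : ℝ), ∀ x ∈ Set.Ioo (0 : ℝ) ε, 0 ≤ x ^ δ * γ' x ∧ x ^ δ * γ' x ≤ M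

/-- under property (⋆) with exponent `δ ∈ [0, 2)`, the function `γ` is
interval-integrable on `(0, T)`, and for every `k ∈ ℕ` the integrand of the Fourier
coefficient `c_k(γ)` is interval-integrable on `(0, T)`. -/
theorem fourier_coefficients_well_defined
    (T δ : ℝ) (hT : 0 < T) (hδ : δ ∈ Set.Ico (0 : ℝ) 2)
    (γ γ' : ℝ → ℝ) (hstar : PropertyStar T δ γ γ') :
    IntervalIntegrable γ volume 0 T ∧
      ∀ k : ℕ, IntervalIntegrable (fun t => γ t * Real.cos (k * π * t / T)) volume 0 T := by
  obtain ⟨hderiv, hcont', hmono, hconc, M, hM, ε, hε, hbound⟩ := hstar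
  have hγcont : ContinuousOn γ (Set.Ioc 0 T) := fun x hx => (hderiv x hx).continuousWithinAt
  set δ' : ℝ := max δ (3/2) with hδ'def
  have hδ'1 : (1:ℝ) < δ' := lt_of_lt_of_le (by norm_num) (le_max_right _ _)
  have hδ'2 : δ' < 2 := max_lt hδ.2 (by norm_num)
  have hδδ' : δ ≤ δ' := le_max_left _ _
  set ε₀ : ℝ := min (min (ε/2) 1) T with hε₀def
  have hε₀pos : 0 < ε₀ := lt_min (lt_min (by linarith) one_pos) hT
  have hε₀T : ε₀ ≤ T := min_le_right _ _
  have hε₀1 : ε₀ ≤ 1 := (min_le_left _ _).trans (min_le_right _ _)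
  have hε₀ε : ε₀ ≤ ε/2 := (min_le_left _ _).trans (min_le_left _ _)
  set C : ℝ := 2 * M with hCdef
  have hC0 : 0 ≤ C := by positivity
  -- derivative is a genuine derivative on the interior
  have hHD : ∀ x ∈ Set.Ioo (0:ℝ) ε₀, HasDerivAt γ (γ' x) x := by
    intro x hx
    have hxT : x ∈ Set.Ioo (0:ℝ) T := ⟨hx.1, lt_of_lt_of_le hx.2 hε₀T⟩
    exact (hderiv x (Set.Ioo_subset_Ioc_self hxT)).hasDerivAt
      (Filter.mem_of_superset (Ioo_mem_nhds hxT.1 hxT.2) Set.Ioo_subset_Ioc_self)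
  -- bound on the derivative with the modified exponent
  have hγ'bound : ∀ x ∈ Set.Ioo (0:ℝ) ε₀, γ' x ≤ C * (δ' - 1) * x ^ (-δ') := by
    intro x hx
    have hxpos : 0 < x := hx.1
    have hxε : x ∈ Set.Ioo (0:ℝ) ε := ⟨hxpos, lt_of_lt_of_le hx.2 (by linarith)⟩
    obtain ⟨h1, h2⟩ := hbound x hxε
    have hxd : (0:ℝ) < x ^ δ := Real.rpow_pos_of_pos hxpos δ
    have hγ'le : γ' x ≤ M * x ^ (-δ) := by
      have h3 : γ' x ≤ M / x ^ δ := by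
        rw [le_div_iff₀ hxd]
        calc γ' x * x ^ δ = x ^ δ * γ' x := by ring
        _ ≤ M := h2
      rw [Real.rpow_neg hxpos.le, ← div_eq_mul_inv]
      exact h3
    have hle2 : M * x ^ (-δ) ≤ M * x ^ (-δ') := by
      apply mul_le_mul_of_nonneg_left _ hM.le
      exact Real.rpow_le_rpow_of_exponent_ge hxpos (hx.2.le.trans hε₀1) (by linarith)
    have hle3 : M * x ^ (-δ') ≤ C * (δ' - 1) * x ^ (-δ') := by
      apply mul_le_mul_of_nonneg_right _ (Real.rpow_nonneg hxpos.le _)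
      have h32 : (3/2:ℝ) ≤ δ' := le_max_right _ _
      rw [hCdef]; nlinarith
    linarith
  -- the auxiliary function g is antitone near 0
  set g : ℝ → ℝ := fun x => γ x + C * x ^ (1 - δ') with hgdef
  have hg_deriv : ∀ x ∈ Set.Ioo (0:ℝ) ε₀,
      HasDerivAt g (γ' x + C * ((1 - δ') * x ^ (1 - δ' - 1))) x := by
    intro x hx
    exact (hHD x hx).add ((Real.hasDerivAt_rpow_const (Or.inl hx.1.ne')).const_mul C)
  have hganti : AntitoneOn g (Set.Ioc (0:ℝ) ε₀) := by
    apply antitoneOn_of_deriv_nonpos (convex_Ioc _ _)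
    · apply ContinuousOn.add
      · exact hγcont.mono (Set.Ioc_subset_Ioc_right hε₀T)
      · exact continuousOn_const.mul
          (ContinuousOn.rpow_const continuousOn_id (fun x hx => Or.inl hx.1.ne'))
    · rw [interior_Ioc]
      exact fun x hx => (hg_deriv x hx).differentiableAt.differentiableWithinAt
    · rw [interior_Ioc]
      intro x hx
      rw [(hg_deriv x hx).deriv]
      have hb := hγ'bound x hx
      have : x ^ (1 - δ' - 1) = x ^ (-δ') := by norm_num
      rw [this]
      nlinarith [Real.rpow_nonneg hx.1.le (-δ')]
  -- lower bound for γ near 0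
  have hlow : ∀ x ∈ Set.Ioc (0:ℝ) ε₀, γ ε₀ - C * x ^ (1 - δ') ≤ γ x := by
    intro x hx
    have h := hganti hx ⟨hε₀pos, le_refl _⟩ hx.2
    have hCε : 0 ≤ C * ε₀ ^ (1 - δ') := mul_nonneg hC0 (Real.rpow_nonneg hε₀pos.le _)
    simp only [hgdef] at h
    linarith
  have hup : ∀ x ∈ Set.Ioc (0:ℝ) T, γ x ≤ γ T := fun x hx => hmono hx ⟨hT, le_refl T⟩ hx.2
  set B : ℝ := |γ ε₀| + |γ T| with hBdef
  have habs : ∀ x ∈ Set.Ioc (0:ℝ) ε₀, |γ x| ≤ B + C * x ^ (1 - δ') := by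
    intro x hx
    have h1 := hlow x hx
    have h2 := hup x ⟨hx.1, hx.2.trans hε₀T⟩
    have hCx : 0 ≤ C * x ^ (1 - δ') := mul_nonneg hC0 (Real.rpow_nonneg hx.1.le _)
    rw [abs_le]
    constructor
    · have := neg_abs_le (γ ε₀); have := abs_nonneg (γ T); linarith
    · have := le_abs_self (γ T); have := abs_nonneg (γ ε₀); linarith
  have hbint : IntervalIntegrable (fun x => B + C * x ^ (1 - δ')) volume 0 ε₀ :=
    intervalIntegrable_const.add ((intervalIntegrable_rpow' (by linarith)).const_mul C)
  have hInt1 : IntervalIntegrable γ volume 0 ε₀ := by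
    rw [intervalIntegrable_iff_integrableOn_Ioc_of_le hε₀pos.le]
    have hbint' : IntegrableOn (fun x => B + C * x ^ (1 - δ')) (Set.Ioc 0 ε₀) volume :=
      (intervalIntegrable_iff_integrableOn_Ioc_of_le hε₀pos.le).mp hbint
    refine Integrable.mono' hbint' ?_ ?_
    · exact (hγcont.mono (Set.Ioc_subset_Ioc_right hε₀T)).aestronglyMeasurable measurableSet_Ioc
    · exact (ae_restrict_iff' measurableSet_Ioc).mpr (ae_of_all _ fun x hx => by
        simpa [Real.norm_eq_abs] using habs x hx)
  have hInt2 : IntervalIntegrable γ volume ε₀ T := by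
    apply ContinuousOn.intervalIntegrable
    apply hγcont.mono
    rw [Set.uIcc_of_le hε₀T]
    exact fun x hx => ⟨lt_of_lt_of_le hε₀pos hx.1, hx.2⟩
  have hγint : IntervalIntegrable γ volume 0 T := hInt1.trans hInt2
  refine ⟨hγint, fun k => ?_⟩
  exact hγint.mul_continuousOn (Continuous.continuousOn (by fun_prop))
end

section
/- Let T > 0 and let γ satisfy property (⋆) with exponent δ ∈ [0,2). Then for every integer k ≥ 1, the Fourier coefficient c_k(γ) = (2/T)·∫₀^T γ(t)·cos(kπt/T) dt satisfies c_k(γ) ≤ 0. -/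
/-!
Put `L = T / k`, so that `[0, T]` is the union of the `k` half-periods `[jL, (j+1)L]` of
`cos (π t / L)`. Folding the `j`-th half-period about its midpoint, its contribution to the
integral is `(-1)^(j+1) D_j` with `D_j = ∫₀^{L/2} (γ((j+1)L - s) - γ(jL + s)) cos (π s / L) ds`.
Since `γ` is increasing, `D_j ≥ 0`; since `γ` is concave, its increments over intervals of a
fixed length decrease under translation to the right, so `D_{j+1} ≤ D_j`. Hence, as in the
Leibniz test, `∑ (-1)^j D_j ≥ 0`, and the integral `-∑ (-1)^j D_j` is nonpositive.
-/

open MeasureTheory Real Filter Set intervalIntegral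

theorem sum_range_neg_one_pow_mul_nonneg {R : Type*} [CommRing R] [LinearOrder R]
    [IsStrictOrderedRing R] :
    ∀ {m : ℕ} {d : ℕ → R}, (∀ j, j + 1 < m → d (j + 1) ≤ d j) → (∀ j < m, 0 ≤ d j) →
      0 ≤ ∑ j ∈ Finset.range m, (-1) ^ j * d j
  | 0, _, _, _ => by simp
  | 1, _, _, hd => by simpa using hd 0 one_pos
  | m + 2, d, hanti, hd => by
    have htail : 0 ≤ ∑ j ∈ Finset.range m, (-1) ^ j * d (j + 1 + 1) :=
      sum_range_neg_one_pow_mul_nonneg (fun j _ => hanti (j + 2) (by omega))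
        (fun j _ => hd (j + 2) (by omega))
    have hhead : d 1 ≤ d 0 := hanti 0 (by omega)
    rw [Finset.sum_range_succ', Finset.sum_range_succ']
    simp only [pow_succ, mul_neg_one, neg_neg, pow_zero, one_mul, neg_one_mul, zero_add]
    linarith

theorem ConcaveOn.map_add_sub_map_add_le {s : Set ℝ} {f : ℝ → ℝ} (hf : ConcaveOn ℝ s f)
    {x y h : ℝ} (hx : x ∈ s) (hyh : y + h ∈ s) (hxy : x ≤ y) (hh : 0 ≤ h) :
    f (y + h) - f (x + h) ≤ f y - f x := by
  rcases (hxy.trans (le_add_of_nonneg_right hh)).eq_or_lt with heq | hlt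
  · obtain rfl : h = 0 := by linarith
    simp
  -- `x + h` and `y` are the two convex combinations of `x` and `y + h` with weights `t`, `1 - t`.
  set t := h / (y + h - x)
  have hpos : 0 < y + h - x := by linarith
  have ht0 : 0 ≤ t := by positivity
  have ht1 : t ≤ 1 := (div_le_one hpos).2 (by linarith)
  have hleft := hf.2 hx hyh (sub_nonneg.2 ht1) ht0 (by ring)
  have hright := hf.2 hx hyh ht0 (sub_nonneg.2 ht1) (by ring)
  have e1 : (1 - t) * x + t * (y + h) = x + h := by simp only [t]; field_simp; ring
  have e2 : t * x + (1 - t) * (y + h) = y := by simp only [t]; field_simp; ring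
  simp only [smul_eq_mul, e1, e2] at hleft hright
  linarith

section Folding

variable {g : ℝ → ℝ} {a L : ℝ}

theorem IntervalIntegrable.reflect_halves (hg : IntervalIntegrable g volume a (a + L)) :
    IntervalIntegrable (fun s => g (a + s)) volume 0 (L / 2) ∧
      IntervalIntegrable (fun s => g (a + L - s)) volume 0 (L / 2) := by
  have hhalf : L / 2 ∈ uIcc 0 L := by
    rw [mem_uIcc]
    rcases le_total 0 L with hL | hL
    · exact Or.inl ⟨by linarith, by linarith⟩
    · exact Or.inr ⟨by linarith, by linarith⟩
  constructor
  · have : IntervalIntegrable (fun s => g (a + s)) volume 0 L := by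
      simpa using hg.comp_add_left a
    exact this.mono_set (uIcc_subset_uIcc_left hhalf)
  · have : IntervalIntegrable (fun s => g (a + L - s)) volume 0 L := by
      simpa using (hg.comp_sub_left (a + L)).symm
    exact this.mono_set (uIcc_subset_uIcc_left hhalf)

theorem intervalIntegral.integral_eq_integral_add_reflect
    (hg : IntervalIntegrable g volume a (a + L)) :
    ∫ t in a..a + L, g t = ∫ s in 0..L / 2, (g (a + s) + g (a + L - s)) := by
  have hmid : a + L / 2 ∈ uIcc a (a + L) := by
    rw [mem_uIcc]
    rcases le_total 0 L with hL | hL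
    · exact Or.inl ⟨by linarith, by linarith⟩
    · exact Or.inr ⟨by linarith, by linarith⟩
  obtain ⟨hleft, hright⟩ := hg.reflect_halves
  rw [integral_add hleft hright, integral_comp_add_left g, integral_comp_sub_left g, add_zero,
    sub_zero, show a + L - L / 2 = a + L / 2 by ring,
    integral_add_adjacent_intervals (hg.mono_set (uIcc_subset_uIcc_left hmid))
      (hg.mono_set (uIcc_subset_uIcc_right hmid))]

end Folding

section HalfPeriodFold

variable {f : ℝ → ℝ} {a L : ℝ}

noncomputable def halfPeriodFold (f : ℝ → ℝ) (L a s : ℝ) : ℝ :=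
  (f (a + L - s) - f (a + s)) * cos (π * s / L)

theorem mul_cos_add_mul_cos_reflect (hL : L ≠ 0) (j : ℕ) (s : ℝ) :
    f (j * L + s) * cos (π * (j * L + s) / L)
        + f (j * L + L - s) * cos (π * (j * L + L - s) / L)
      = -((-1) ^ j * halfPeriodFold f L (j * L) s) := by
  have hleft : cos (π * (j * L + s) / L) = (-1) ^ j * cos (π * s / L) := by
    rw [← cos_add_nat_mul_pi]; congr 1; field_simp; ring
  have hright : cos (π * (j * L + L - s) / L) = (-1) ^ (j + 1) * cos (π * s / L) := by
    rw [← cos_nat_mul_pi_sub]; congr 1; push_cast; field_simp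
  rw [hleft, hright, halfPeriodFold, pow_succ]
  ring

theorem intervalIntegrable_halfPeriodFold (hL : L ≠ 0) (j : ℕ)
    (hg : IntervalIntegrable (fun t => f t * cos (π * t / L)) volume (j * L) (j * L + L)) :
    IntervalIntegrable (halfPeriodFold f L (j * L)) volume 0 (L / 2) := by
  obtain ⟨hleft, hright⟩ := hg.reflect_halves
  have hsq : ((-1 : ℝ) ^ j) * (-1) ^ j = 1 := by rw [← pow_add, Even.neg_one_pow ⟨j, rfl⟩]
  convert (hleft.add hright).const_mul (-(-1) ^ j) using 1
  funext s
  rw [mul_cos_add_mul_cos_reflect hL]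
  linear_combination (-halfPeriodFold f L (j * L) s) * hsq

theorem integral_mul_cos_eq_neg_integral_halfPeriodFold (hL : L ≠ 0) (j : ℕ)
    (hg : IntervalIntegrable (fun t => f t * cos (π * t / L)) volume (j * L) (j * L + L)) :
    ∫ t in j * L..j * L + L, f t * cos (π * t / L)
      = -((-1) ^ j * ∫ s in 0..L / 2, halfPeriodFold f L (j * L) s) := by
  rw [integral_eq_integral_add_reflect hg, ← intervalIntegral.integral_const_mul,
    ← intervalIntegral.integral_neg]
  exact integral_congr fun s _ => mul_cos_add_mul_cos_reflect hL j s

theorem cos_pi_mul_div_nonneg (hL : 0 < L) {s : ℝ} (hs : s ∈ Icc 0 (L / 2)) :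
    0 ≤ cos (π * s / L) := by
  apply cos_nonneg_of_neg_pi_div_two_le_of_le
  · have : 0 ≤ π * s / L := by have := hs.1; positivity
    linarith [pi_pos]
  · rw [div_le_iff₀ hL]
    nlinarith [pi_pos, hs.2]

theorem integral_halfPeriodFold_nonneg (hL : 0 < L) (hf : MonotoneOn f (Ioc a (a + L))) :
    0 ≤ ∫ s in 0..L / 2, halfPeriodFold f L a s := by
  rw [integral_of_le (by positivity)]
  refine setIntegral_nonneg measurableSet_Ioc fun s hs =>
    mul_nonneg (sub_nonneg.2 ?_) (cos_pi_mul_div_nonneg hL (Ioc_subset_Icc_self hs))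
  exact hf ⟨by linarith [hs.1], by linarith [hs.2]⟩ ⟨by linarith [hs.2], by linarith [hs.1]⟩
    (by linarith [hs.2])

theorem integral_halfPeriodFold_add_le (hL : 0 < L) (hf : ConcaveOn ℝ (Ioc a (a + 2 * L)) f)
    (h₀ : IntervalIntegrable (halfPeriodFold f L a) volume 0 (L / 2))
    (h₁ : IntervalIntegrable (halfPeriodFold f L (a + L)) volume 0 (L / 2)) :
    ∫ s in 0..L / 2, halfPeriodFold f L (a + L) s ≤ ∫ s in 0..L / 2, halfPeriodFold f L a s := by
  refine integral_mono_on_of_le_Ioo (by positivity) h₁ h₀ fun s hs => ?_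
  have hinc := hf.map_add_sub_map_add_le (x := a + s) (y := a + L - s) (h := L)
    ⟨by linarith [hs.1], by linarith [hs.2]⟩ ⟨by linarith [hs.2], by linarith [hs.1]⟩
    (by linarith [hs.2]) hL.le
  rw [show a + L - s + L = a + L + L - s by ring, show a + s + L = a + L + s by ring] at hinc
  exact mul_le_mul_of_nonneg_right hinc (cos_pi_mul_div_nonneg hL (Ioo_subset_Icc_self hs))

theorem integral_mul_cos_nonpos_of_monotoneOn_of_concaveOn (hL : 0 < L) (k : ℕ)
    (hmono : MonotoneOn f (Ioc 0 (k * L))) (hconc : ConcaveOn ℝ (Ioc 0 (k * L)) f) :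
    ∫ t in 0..k * L, f t * cos (π * t / L) ≤ 0 := by
  by_cases hg : IntervalIntegrable (fun t => f t * cos (π * t / L)) volume 0 (k * L)
  swap
  · rw [integral_undef hg]
  have hsub : ∀ j m : ℕ, j + m ≤ k → Ioc (j * L) (j * L + m * L) ⊆ Ioc 0 (k * L) := by
    intro j m hjm t ht
    have : (j : ℝ) + m ≤ k := by exact_mod_cast hjm
    exact ⟨lt_of_le_of_lt (by positivity) ht.1, ht.2.trans (by nlinarith)⟩
  have hpiece : ∀ j < k,
      IntervalIntegrable (fun t => f t * cos (π * t / L)) volume (j * L) (j * L + L) := by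
    intro j hj
    have : (j : ℝ) + 1 ≤ k := by exact_mod_cast hj
    refine hg.mono_set ?_
    rw [uIcc_of_le (by nlinarith), uIcc_of_le (by positivity)]
    exact Icc_subset_Icc (by positivity) (by nlinarith)
  set D : ℕ → ℝ := fun j => ∫ s in 0..L / 2, halfPeriodFold f L (j * L) s
  have hnext : ∀ j : ℕ, ((j + 1 : ℕ) : ℝ) * L = j * L + L := fun j => by push_cast; ring
  have hsplit :
      ∫ t in 0..k * L, f t * cos (π * t / L) = -∑ j ∈ Finset.range k, (-1) ^ j * D j := by
    have hsum := sum_integral_adjacent_intervals (a := fun j : ℕ => (j : ℝ) * L)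
      (fun j hj => by simpa only [hnext] using hpiece j hj)
    simp only [hnext, Nat.cast_zero, zero_mul] at hsum
    rw [← Finset.sum_neg_distrib, ← hsum]
    exact Finset.sum_congr rfl fun j hj =>
      integral_mul_cos_eq_neg_integral_halfPeriodFold hL.ne' j (hpiece j (Finset.mem_range.1 hj))
  rw [hsplit, neg_nonpos]
  refine sum_range_neg_one_pow_mul_nonneg (fun j hj => ?_) (fun j hj => ?_)
  · simp only [D, hnext]
    refine integral_halfPeriodFold_add_le hL (hconc.subset ?_ (convex_Ioc _ _))
      (intervalIntegrable_halfPeriodFold hL.ne' j (hpiece j (by omega)))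
      (by simpa only [hnext] using
        intervalIntegrable_halfPeriodFold hL.ne' (j + 1) (hpiece (j + 1) hj))
    simpa using hsub j 2 (by omega)
  · exact integral_halfPeriodFold_nonneg hL (hmono.mono (by simpa using hsub j 1 (by omega)))

end HalfPeriodFold

theorem fourier_coefficients_nonpositive_general
    (T δ : ℝ) (hT : 0 < T)
    (γ γ' : ℝ → ℝ) (hstar : PropertyStar T δ γ γ') :
    ∀ k : ℕ, 1 ≤ k →
      (2 / T) * ∫ t in (0 : ℝ)..T, γ t * Real.cos (k * π * t / T) ≤ 0 := by
  intro k hk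
  obtain ⟨-, -, hmono, hconc, -⟩ := hstar
  have hk0 : (k : ℝ) ≠ 0 := by positivity
  have hkL : (k : ℝ) * (T / k) = T := mul_div_cancel₀ T hk0
  have hcoef := integral_mul_cos_nonpos_of_monotoneOn_of_concaveOn (div_pos hT (by positivity)) k
    (hkL.symm ▸ hmono) (hkL.symm ▸ hconc)
  have harg : ∀ t, π * t / (T / k) = k * π * t / T := fun t => by field_simp
  simp only [hkL, harg] at hcoef
  exact mul_nonpos_of_nonneg_of_nonpos (by positivity) hcoef

/-- under property (⋆) with exponent `δ ∈ [0, 2)`, the Fourier coefficients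
`c_k(γ) = (2/T) ∫₀ᵀ γ(t) cos(kπt/T) dt` are nonpositive for every `k ≥ 1`. -/
theorem fourier_coefficients_nonpositive
    (T δ : ℝ) (hT : 0 < T) (hδ : δ ∈ Set.Ico (0 : ℝ) 2)
    (γ γ' : ℝ → ℝ) (hstar : PropertyStar T δ γ γ') :
    ∀ k : ℕ, 1 ≤ k →
      (2 / T) * ∫ t in (0 : ℝ)..T, γ t * Real.cos (k * π * t / T) ≤ 0 :=
  fourier_coefficients_nonpositive_general T δ hT γ γ' hstar
end

section
/- Let T > 0 and let γ satisfy property (⋆) with exponent δ ∈ [0,2). Then there exists a constant C > 0 such that for every integer k ≥ 1, the Fourier coefficient c_k(γ) = (2/T)·∫₀^T γ(t)·cos(kπt/T) dt satisfies |c_k(γ)| ≤ C·k^(δ−2). -/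
/-!
Integrating by parts, `ω ∫₀ᵀ γ(t) cos(ωt) dt = -∫₀ᵀ γ'(t) sin(ωt) dt` for `ω = kπ/T`. Concavity
makes `γ'` antitone, so the bound near `0` gives `0 ≤ γ'(t) ≤ C t^(-δ)` on all of `(0, T]`, hence
`|γ(t)| = O(t^(-δ/2))`; this makes `γ(t) cos(ωt)` integrable and kills the boundary term at `0`.
Cutting `[0, T]` into the `k` arches of the sine turns `∫₀ᵀ γ'(t) sin(ωt) dt` into an alternating
sum whose terms decrease (`γ'` is antitone, and nonnegative as `γ` increases), so it is bounded by
the first arch, which is at most `C ω ∫₀^{π/ω} t^(1-δ) dt = O(k^(δ-1))`. Dividing by `ω` gives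
`|c_k(γ)| = O(k^(δ-2))`.
-/

open MeasureTheory Real Filter Set intervalIntegral

open Topology

lemma alternating_sum_mem_Icc {a : ℕ → ℝ} {n : ℕ} (ha : AntitoneOn a (Iic n))
    (ha₀ : ∀ j ≤ n, 0 ≤ a j) :
    ∑ j ∈ Finset.range (n + 1), (-1 : ℝ) ^ j * a j ∈ Icc 0 (a 0) := by
  induction n generalizing a with
  | zero => simpa using ha₀ 0 le_rfl
  | succ n ih =>
    have hshift : ∑ j ∈ Finset.range (n + 2), (-1 : ℝ) ^ j * a j =
        a 0 - ∑ j ∈ Finset.range (n + 1), (-1 : ℝ) ^ j * a (j + 1) := by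
      rw [Finset.sum_range_succ']
      simp only [pow_succ, mul_neg_one, neg_mul, Finset.sum_neg_distrib, pow_zero, one_mul]
      ring
    obtain ⟨h₀, h₁⟩ := ih (a := fun j => a (j + 1))
      (fun i hi j hj hij => ha (Nat.succ_le_succ hi) (Nat.succ_le_succ hj) (by omega))
      (fun j hj => ha₀ _ (by omega))
    have h₁₀ : a 1 ≤ a 0 := ha (by simp) (by simp) zero_le_one
    rw [hshift]
    constructor <;> linarith

lemma intervalIntegrable_of_abs_le_mul_rpow {f : ℝ → ℝ} {T C p : ℝ} (hT : 0 ≤ T) (hp : -1 < p)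
    (hf : ContinuousOn f (Ioc 0 T)) (hbound : ∀ t ∈ Ioc 0 T, |f t| ≤ C * t ^ p) :
    IntervalIntegrable f volume 0 T := by
  refine ((intervalIntegrable_rpow' hp).const_mul C).mono_fun' ?_ ?_ <;> rw [uIoc_of_le hT]
  · exact hf.aestronglyMeasurable measurableSet_Ioc
  · exact (ae_restrict_iff' measurableSet_Ioc).2 (ae_of_all _ hbound)

lemma abs_mul_sin_le_of_abs_le_mul_rpow {x y C p ω : ℝ} (hx : 0 < x) (hω : 0 ≤ ω)
    (hy : |y| ≤ C * x ^ p) : |y * sin (ω * x)| ≤ C * ω * x ^ (p + 1) := by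
  have hsin : |sin (ω * x)| ≤ ω * x := abs_sin_le_abs.trans_eq (abs_of_nonneg (by positivity))
  calc |y * sin (ω * x)| ≤ C * x ^ p * (ω * x) :=
        abs_mul y _ ▸ mul_le_mul hy hsin (abs_nonneg _) ((abs_nonneg _).trans hy)
    _ = C * ω * x ^ (p + 1) := by rw [rpow_add_one hx.ne']; ring

lemma tendsto_mul_sin_nhdsGT_zero {f : ℝ → ℝ} {T C p ω : ℝ} (hT : 0 < T) (hp : -1 < p)
    (hω : 0 ≤ ω) (hbound : ∀ t ∈ Ioc 0 T, |f t| ≤ C * t ^ p) :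
    Tendsto (fun t => f t * sin (ω * t)) (𝓝[>] 0) (𝓝 0) := by
  have hpow : Tendsto (fun t : ℝ => C * ω * t ^ (p + 1)) (𝓝[>] 0) (𝓝 0) := by
    have := ((continuousAt_rpow_const 0 (p + 1) (Or.inr (by linarith))).tendsto.const_mul
      (C * ω)).mono_left (nhdsWithin_le_nhds (s := Ioi 0))
    rwa [zero_rpow (by linarith), mul_zero] at this
  refine squeeze_zero_norm' ?_ hpow
  filter_upwards [Ioc_mem_nhdsGT hT] with t ht
  exact abs_mul_sin_le_of_abs_le_mul_rpow ht.1 hω (hbound t ht)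

lemma integral_mul_sin_le {g : ℝ → ℝ} {b C p ω : ℝ} (hb : 0 ≤ b) (hp : -2 < p) (hω : 0 ≤ ω)
    (hg : ContinuousOn g (Ioc 0 b)) (hbound : ∀ t ∈ Ioc 0 b, |g t| ≤ C * t ^ p) :
    ∫ t in 0..b, g t * sin (ω * t) ≤ C * ω * b ^ (p + 2) / (p + 2) := by
  have hp₁ : -1 < p + 1 := by linarith
  have hint : IntervalIntegrable (fun t => g t * sin (ω * t)) volume 0 b :=
    intervalIntegrable_of_abs_le_mul_rpow hb hp₁ (hg.mul (by fun_prop))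
      fun t ht => abs_mul_sin_le_of_abs_le_mul_rpow ht.1 hω (hbound t ht)
  calc ∫ t in 0..b, g t * sin (ω * t) ≤ ∫ t in 0..b, C * ω * t ^ (p + 1) :=
        integral_mono_on_of_le_Ioo hb hint ((intervalIntegrable_rpow' hp₁).const_mul _)
          fun t ht => (le_abs_self _).trans
            (abs_mul_sin_le_of_abs_le_mul_rpow ht.1 hω (hbound t (Ioo_subset_Ioc_self ht)))
    _ = C * ω * b ^ (p + 2) / (p + 2) := by
        rw [intervalIntegral.integral_const_mul, integral_rpow (Or.inl hp₁),
          zero_rpow (by linarith)]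
        ring_nf

lemma one_le_rpow_mul_rpow_neg {t T δ : ℝ} (ht : 0 < t) (htT : t ≤ T) (hδ : 0 ≤ δ) :
    1 ≤ T ^ δ * t ^ (-δ) := by
  rw [rpow_neg ht.le, ← div_eq_mul_inv, one_le_div (rpow_pos_of_pos ht _)]
  exact rpow_le_rpow ht.le htT hδ

lemma AntitoneOn.exists_le_mul_rpow_neg {g : ℝ → ℝ} {T δ ε M : ℝ} (hg : AntitoneOn g (Ioc 0 T))
    (hT : 0 < T) (hδ : 0 ≤ δ) (hε : 0 < ε) (hM : ∀ x ∈ Ioo 0 ε, x ^ δ * g x ≤ M) :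
    ∃ C > 0, ∀ t ∈ Ioc 0 T, g t ≤ C * t ^ (-δ) := by
  set e := min (ε / 2) T
  have he : e ∈ Ioc 0 T := ⟨lt_min (half_pos hε) hT, min_le_right _ _⟩
  refine ⟨max (max M (|g e| * T ^ δ)) 1, by positivity, fun t ht => ?_⟩
  have htδ : 0 < t ^ (-δ) := rpow_pos_of_pos ht.1 _
  rcases le_or_gt t e with hte | hte
  · have htε : t ∈ Ioo 0 ε := ⟨ht.1, hte.trans_lt ((min_le_left _ _).trans_lt (half_lt_self hε))⟩
    calc g t = t ^ (-δ) * (t ^ δ * g t) := by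
          rw [← mul_assoc, ← rpow_add ht.1, neg_add_cancel, rpow_zero, one_mul]
      _ ≤ t ^ (-δ) * M := mul_le_mul_of_nonneg_left (hM t htε) htδ.le
      _ ≤ _ := by rw [mul_comm]; gcongr; exact (le_max_left _ _).trans (le_max_left _ _)
  · calc g t ≤ |g e| := (hg he ht hte.le).trans (le_abs_self _)
      _ ≤ |g e| * T ^ δ * t ^ (-δ) := by
          rw [mul_assoc]
          exact le_mul_of_one_le_right (abs_nonneg _) (one_le_rpow_mul_rpow_neg ht.1 ht.2 hδ)
      _ ≤ _ := by gcongr; exact (le_max_right _ _).trans (le_max_left _ _)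

lemma exists_abs_le_mul_rpow_of_hasDerivWithinAt {f f' : ℝ → ℝ} {T δ C : ℝ} (hT : 0 < T)
    (hδ : δ ∈ Ico 0 2) (hf : ∀ x ∈ Ioc 0 T, HasDerivWithinAt f (f' x) (Ioc 0 T) x)
    (hf' : ContinuousOn f' (Ioc 0 T)) (hbound : ∀ t ∈ Ioc 0 T, |f' t| ≤ C * t ^ (-δ)) :
    ∃ C', ∀ t ∈ Ioc 0 T, |f t| ≤ C' * t ^ (-(δ / 2)) := by
  have hC : 0 ≤ C := nonneg_of_mul_nonneg_left ((abs_nonneg _).trans (hbound T ⟨hT, le_rfl⟩))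
    (rpow_pos_of_pos hT _)
  have hδ₂ : δ / 2 ∈ Ico 0 1 := ⟨by linarith [hδ.1], by linarith [hδ.2]⟩
  have hp : -1 < -(δ / 2) := by linarith [hδ₂.2]
  set K := T ^ (-(δ / 2) + 1) / (-(δ / 2) + 1)
  refine ⟨|f T| * T ^ (δ / 2) + C * K, fun t ht => ?_⟩
  have hsub : Icc t T ⊆ Ioc 0 T := fun s hs => ⟨ht.1.trans_le hs.1, hs.2⟩
  have hftc : ∫ s in t..T, f' s = f T - f t :=
    integral_eq_sub_of_hasDeriv_right_of_le ht.2
      (fun x hx => (hf x (hsub hx)).continuousWithinAt.mono hsub)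
      (fun x hx => ((hf x (hsub (Ioo_subset_Icc_self hx))).hasDerivAt
        (Ioc_mem_nhds (ht.1.trans hx.1) hx.2)).hasDerivWithinAt)
      ((hf'.mono hsub).intervalIntegrable_of_Icc ht.2)
  -- on `[t, T]`, `s ^ (-δ) ≤ t ^ (-δ/2) * s ^ (-δ/2)` trades the blow-up at `0` for integrability
  have hint : |∫ s in t..T, f' s| ≤ C * K * t ^ (-(δ / 2)) := by
    calc ‖∫ s in t..T, f' s‖ ≤ ∫ s in t..T, C * t ^ (-(δ / 2)) * s ^ (-(δ / 2)) := by
          refine norm_integral_le_of_norm_le ht.2 (ae_of_all _ fun s hs => ?_)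
            ((intervalIntegrable_rpow' hp).const_mul _)
          have hs₀ : 0 < s := ht.1.trans hs.1
          calc ‖f' s‖ ≤ C * s ^ (-δ) := hbound s ⟨hs₀, hs.2⟩
            _ = C * s ^ (-(δ / 2)) * s ^ (-(δ / 2)) := by
                rw [mul_assoc, ← rpow_add hs₀]; ring_nf
            _ ≤ C * t ^ (-(δ / 2)) * s ^ (-(δ / 2)) := by
                have := rpow_le_rpow_of_nonpos ht.1 hs.1.le (neg_nonpos.2 hδ₂.1)
                gcongr
      _ = C * t ^ (-(δ / 2)) * ((T ^ (-(δ / 2) + 1) - t ^ (-(δ / 2) + 1)) / (-(δ / 2) + 1)) := by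
          rw [intervalIntegral.integral_const_mul, integral_rpow (Or.inl hp)]
      _ ≤ C * t ^ (-(δ / 2)) * K := by
          refine mul_le_mul_of_nonneg_left ?_ (mul_nonneg hC (rpow_nonneg ht.1.le _))
          exact div_le_div_of_nonneg_right (sub_le_self _ (rpow_nonneg ht.1.le _)) (by linarith)
      _ = C * K * t ^ (-(δ / 2)) := by ring
  have hfT : |f T| ≤ |f T| * T ^ (δ / 2) * t ^ (-(δ / 2)) := by
    rw [mul_assoc]
    exact le_mul_of_one_le_right (abs_nonneg _) (one_le_rpow_mul_rpow_neg ht.1 ht.2 hδ₂.1)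
  calc |f t| = |f T - ∫ s in t..T, f' s| := by rw [hftc, sub_sub_cancel]
    _ ≤ |f T| + |∫ s in t..T, f' s| := abs_sub _ _
    _ ≤ _ := by rw [add_mul]; exact add_le_add hfT hint

lemma mul_integral_mul_cos_eq_neg_integral_mul_sin {f f' : ℝ → ℝ} {T ω : ℝ} (hT : 0 ≤ T)
    (hf : ∀ x ∈ Ioc 0 T, HasDerivWithinAt f (f' x) (Ioc 0 T) x) (hωT : sin (ω * T) = 0)
    (hlim : Tendsto (fun t => f t * sin (ω * t)) (𝓝[>] 0) (𝓝 0))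
    (hcos : IntervalIntegrable (fun t => f t * cos (ω * t)) volume 0 T)
    (hsin : IntervalIntegrable (fun t => f' t * sin (ω * t)) volume 0 T) :
    ω * ∫ t in 0..T, f t * cos (ω * t) = -∫ t in 0..T, f' t * sin (ω * t) := by
  set F := fun t => f t * sin (ω * t)
  -- `F 0 = 0` whatever `f 0` is, so `hlim` makes `F` continuous on `[0, T]` and the fundamental
  -- theorem of calculus applies on the closed interval, with no improper integral
  have hFcont : ContinuousOn F (Icc 0 T) := by
    intro x hx
    rcases hx.1.eq_or_lt with rfl | hx₀
    · refine (continuousWithinAt_Ioi_iff_Ici.1 ?_).mono Icc_subset_Ici_self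
      simpa [ContinuousWithinAt, F] using hlim
    · refine ContinuousWithinAt.mono_of_mem_nhdsWithin (t := Ioc 0 T) ?_
        (mem_nhdsWithin.2 ⟨Ioi 0, isOpen_Ioi, hx₀, fun y hy => ⟨hy.1, hy.2.2⟩⟩)
      exact (hf x ⟨hx₀, hx.2⟩).continuousWithinAt.mul
        (by fun_prop : Continuous fun t => sin (ω * t)).continuousWithinAt
  have hFderiv : ∀ x ∈ Ioo 0 T,
      HasDerivAt F (f' x * sin (ω * x) + ω * (f x * cos (ω * x))) x := by
    intro x hx
    have hfx := (hf x (Ioo_subset_Ioc_self hx)).hasDerivAt (Ioc_mem_nhds hx.1 hx.2)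
    have hsinx : HasDerivAt (fun t => sin (ω * t)) (cos (ω * x) * ω) x := by
      simpa using ((hasDerivAt_id x).const_mul ω).sin
    exact (hfx.fun_mul hsinx).congr_deriv (by ring)
  have hftc := integral_eq_sub_of_hasDeriv_right_of_le hT hFcont
    (fun x hx => (hFderiv x hx).hasDerivWithinAt) (hsin.add (hcos.const_mul ω))
  rw [integral_add hsin (hcos.const_mul ω), intervalIntegral.integral_const_mul] at hftc
  simp only [F, hωT, mul_zero, sin_zero, sub_zero] at hftc
  linarith

section Arches

variable {g : ℝ → ℝ} {b ω : ℝ}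

lemma sin_mul_add_nat_mul (hωb : ω * b = π) (s : ℝ) (j : ℕ) :
    sin (ω * (s + j * b)) = (-1) ^ j * sin (ω * s) := by
  rw [mul_add, mul_left_comm, hωb, sin_add_nat_mul_pi]

lemma IntervalIntegrable.mono_nat_mul {f : ℝ → ℝ} {n j : ℕ}
    (hf : IntervalIntegrable f volume 0 (n * b)) (hb : 0 ≤ b) (hj : j < n) :
    IntervalIntegrable f volume (j * b) ((j + 1) * b) := by
  refine hf.mono_set (uIcc_subset_uIcc ?_ ?_) <;> rw [uIcc_of_le (by positivity)]
  · exact ⟨by positivity, by gcongr⟩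
  · exact ⟨by positivity, by gcongr; exact_mod_cast hj⟩

lemma integral_mul_sin_eq_alternating_sum (n : ℕ) (hb : 0 ≤ b) (hωb : ω * b = π)
    (hint : IntervalIntegrable (fun t => g t * sin (ω * t)) volume 0 (n * b)) :
    ∫ t in 0..n * b, g t * sin (ω * t) =
      ∑ j ∈ Finset.range n, (-1) ^ j * ∫ s in 0..b, g (s + j * b) * sin (ω * s) := by
  have hpiece : ∀ j : ℕ, ∫ t in j * b..(j + 1) * b, g t * sin (ω * t) =
      (-1) ^ j * ∫ s in 0..b, g (s + j * b) * sin (ω * s) := by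
    intro j
    rw [← intervalIntegral.integral_const_mul, ← zero_add ((j : ℝ) * b),
      show ((j : ℝ) + 1) * b = b + j * b by ring,
      ← integral_comp_add_right (fun t => g t * sin (ω * t))]
    congr 1 with s
    rw [zero_add, sin_mul_add_nat_mul hωb]
    ring
  have hadj := sum_integral_adjacent_intervals (a := fun j : ℕ => j * b) (n := n)
    (f := fun t => g t * sin (ω * t)) (μ := volume) fun j hj => by
      simpa using hint.mono_nat_mul hb hj
  simpa [hpiece] using hadj.symm

lemma abs_integral_mul_sin_le_first_arch {T : ℝ} {k : ℕ} (hk : k ≠ 0) (hω : 0 < ω)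
    (hωT : ω * T = k * π) (hg : AntitoneOn g (Ioc 0 T)) (hg₀ : ∀ t ∈ Ioc 0 T, 0 ≤ g t)
    (hint : IntervalIntegrable (fun t => g t * sin (ω * t)) volume 0 T) :
    |∫ t in 0..T, g t * sin (ω * t)| ≤ ∫ t in 0..π / ω, g t * sin (ω * t) := by
  obtain ⟨n, rfl⟩ := Nat.exists_eq_add_one_of_ne_zero hk
  set b := π / ω
  have hb : 0 < b := div_pos pi_pos hω
  have hωb : ω * b = π := mul_div_cancel₀ π hω.ne'
  obtain rfl : T = (n + 1 : ℕ) * b := by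
    rw [← mul_right_inj' hω.ne', hωT, mul_left_comm, hωb]
  have hmem : ∀ j ≤ n, ∀ s ∈ Ioc 0 b, s + j * b ∈ Ioc 0 ((n + 1 : ℕ) * b) := fun j hj s hs =>
    ⟨add_pos_of_pos_of_nonneg hs.1 (by positivity), by
      push_cast; nlinarith [(Nat.cast_le (α := ℝ)).2 hj, hs.2]⟩
  have hsin : ∀ s ∈ Icc 0 b, 0 ≤ sin (ω * s) := fun s hs =>
    sin_nonneg_of_nonneg_of_le_pi (by nlinarith [hs.1]) (hωb ▸ by nlinarith [hs.2])
  have hint_arch : ∀ j ≤ n,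
      IntervalIntegrable (fun s => g (s + j * b) * sin (ω * s)) volume 0 b := fun j hj => by
    have := ((hint.mono_nat_mul hb.le (Nat.lt_add_one_of_le hj)).comp_add_right (j * b)).const_mul
      ((-1) ^ j)
    convert this using 1
    · ext s
      have hsq : (-1 : ℝ) ^ j * (-1) ^ j = 1 := by rw [← mul_pow]; norm_num
      rw [sin_mul_add_nat_mul hωb]
      linear_combination -(g (s + j * b) * sin (ω * s)) * hsq
    · ring
    · ring
  set a := fun j : ℕ => ∫ s in 0..b, g (s + j * b) * sin (ω * s)
  have ha₀ : ∀ j ≤ n, 0 ≤ a j := fun j hj => integral_nonneg hb.le fun s hs => by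
    rcases hs.1.eq_or_lt with rfl | hs₀
    · simp
    · exact mul_nonneg (hg₀ _ (hmem j hj s ⟨hs₀, hs.2⟩)) (hsin s hs)
  have ha : AntitoneOn a (Iic n) := fun i hi j hj hij =>
    integral_mono_on_of_le_Ioo hb.le (hint_arch j hj) (hint_arch i hi) fun s hs =>
      mul_le_mul_of_nonneg_right
        (hg (hmem i hi s (Ioo_subset_Ioc_self hs)) (hmem j hj s (Ioo_subset_Ioc_self hs))
          (by gcongr))
        (hsin s (Ioo_subset_Icc_self hs))
  obtain ⟨hsum₀, hsum₁⟩ := alternating_sum_mem_Icc ha ha₀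
  rw [integral_mul_sin_eq_alternating_sum (n + 1) hb.le hωb hint, abs_of_nonneg hsum₀]
  simpa [a] using hsum₁

end Arches

lemma abs_integral_mul_cos_le {f f' : ℝ → ℝ} {T δ C ω : ℝ} {k : ℕ} (hT : 0 < T)
    (hδ : δ ∈ Ico 0 2) (hk : k ≠ 0) (hω : 0 < ω) (hωT : ω * T = k * π)
    (hf : ∀ x ∈ Ioc 0 T, HasDerivWithinAt f (f' x) (Ioc 0 T) x) (hf'c : ContinuousOn f' (Ioc 0 T))
    (hf'anti : AntitoneOn f' (Ioc 0 T)) (hf'₀ : ∀ t ∈ Ioc 0 T, 0 ≤ f' t)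
    (hf'le : ∀ t ∈ Ioc 0 T, f' t ≤ C * t ^ (-δ)) :
    |∫ t in 0..T, f t * cos (ω * t)| ≤ C * (π / ω) ^ (2 - δ) / (2 - δ) := by
  have hf'abs : ∀ t ∈ Ioc 0 T, |f' t| ≤ C * t ^ (-δ) := fun t ht =>
    (abs_of_nonneg (hf'₀ t ht)).trans_le (hf'le t ht)
  obtain ⟨C', hfabs⟩ := exists_abs_le_mul_rpow_of_hasDerivWithinAt hT hδ hf hf'c hf'abs
  have hfc : ContinuousOn f (Ioc 0 T) := fun x hx => (hf x hx).continuousWithinAt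
  have hcos : IntervalIntegrable (fun t => f t * cos (ω * t)) volume 0 T :=
    intervalIntegrable_of_abs_le_mul_rpow hT.le (by linarith [hδ.2]) (hfc.mul (by fun_prop))
      fun t ht => (abs_mul _ _).trans_le <|
        (mul_le_of_le_one_right (abs_nonneg _) (abs_cos_le_one _)).trans (hfabs t ht)
  have hsin : IntervalIntegrable (fun t => f' t * sin (ω * t)) volume 0 T :=
    intervalIntegrable_of_abs_le_mul_rpow hT.le (by linarith [hδ.2]) (hf'c.mul (by fun_prop))
      fun t ht => abs_mul_sin_le_of_abs_le_mul_rpow ht.1 hω.le (hf'abs t ht)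
  have hibp := mul_integral_mul_cos_eq_neg_integral_mul_sin hT.le hf
    (by rw [hωT, sin_nat_mul_pi]) (tendsto_mul_sin_nhdsGT_zero hT (by linarith [hδ.2]) hω.le hfabs)
    hcos hsin
  have hπω : π / ω ≤ T := by
    rw [div_le_iff₀' hω, hωT]
    exact le_mul_of_one_le_left pi_pos.le (by exact_mod_cast Nat.one_le_iff_ne_zero.2 hk)
  have hfirst := integral_mul_sin_le (div_pos pi_pos hω).le (by linarith [hδ.2]) hω.le
    (hf'c.mono (Ioc_subset_Ioc_right hπω)) fun t ht => hf'abs t ⟨ht.1, ht.2.trans hπω⟩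
  rw [neg_add_eq_sub] at hfirst
  refine le_of_mul_le_mul_left ?_ hω
  calc ω * |∫ t in 0..T, f t * cos (ω * t)| = |∫ t in 0..T, f' t * sin (ω * t)| := by
        rw [← abs_neg (∫ t in 0..T, f' t * sin (ω * t)), ← hibp, abs_mul, abs_of_pos hω]
    _ ≤ ∫ t in 0..π / ω, f' t * sin (ω * t) :=
        abs_integral_mul_sin_le_first_arch hk hω hωT hf'anti hf'₀ hsin
    _ ≤ _ := hfirst.trans_eq (by ring)

/-- under property (⋆) with exponent `δ ∈ [0, 2)`, the Fourier coefficients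
`c_k(γ) = (2/T) ∫₀ᵀ γ(t) cos(kπt/T) dt` satisfy `|c_k(γ)| ≤ C k^(δ - 2)` for all `k ≥ 1`. -/
theorem fourier_coefficients_decay
    (T δ : ℝ) (hT : 0 < T) (hδ : δ ∈ Set.Ico (0 : ℝ) 2)
    (γ γ' : ℝ → ℝ) (hstar : PropertyStar T δ γ γ') :
    ∃ C > (0 : ℝ), ∀ k : ℕ, 1 ≤ k →
      |(2 / T) * ∫ t in (0 : ℝ)..T, γ t * Real.cos (k * π * t / T)| ≤ C * (k : ℝ) ^ (δ - 2) := by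
  obtain ⟨hγ, hγ'c, hγmono, hγconc, M, -, ε, hε, hM⟩ := hstar
  have hγ'eq : EqOn (derivWithin γ (Ioc 0 T)) γ' (Ioc 0 T) := fun x hx =>
    (hγ x hx).derivWithin (uniqueDiffOn_Ioc 0 T x hx)
  have hγ'anti : AntitoneOn γ' (Ioc 0 T) :=
    (hγconc.antitoneOn_derivWithin fun x hx => (hγ x hx).differentiableWithinAt).congr hγ'eq
  have hγ'₀ : ∀ t ∈ Ioc 0 T, 0 ≤ γ' t := fun t ht => hγ'eq ht ▸ hγmono.derivWithin_nonneg
  obtain ⟨C, hC, hγ'le⟩ := hγ'anti.exists_le_mul_rpow_neg hT hδ.1 hε fun x hx => (hM x hx).2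
  have h2δ : 0 < 2 - δ := by linarith [hδ.2]
  refine ⟨2 * C * T ^ (1 - δ) / (2 - δ), by positivity, fun k hk => ?_⟩
  have hk₀ : (0 : ℝ) < k := by exact_mod_cast hk
  have hω : 0 < k * π / T := by positivity
  have hbound := abs_integral_mul_cos_le hT hδ (k := k) (by omega) hω (by field_simp) hγ hγ'c
    hγ'anti hγ'₀ hγ'le
  rw [show π / (k * π / T) = T / k by field_simp] at hbound
  calc |(2 / T) * ∫ t in 0..T, γ t * cos (k * π * t / T)|
      = 2 / T * |∫ t in 0..T, γ t * cos (k * π / T * t)| := by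
        rw [abs_mul, abs_of_pos (by positivity)]
        simp_rw [mul_div_right_comm _ _ T]
    _ ≤ 2 / T * (C * (T / k) ^ (2 - δ) / (2 - δ)) := by gcongr
    _ = 2 * C * T ^ (1 - δ) / (2 - δ) * k ^ (δ - 2) := by
        rw [div_rpow hT.le hk₀.le, show δ - 2 = -(2 - δ) by ring, rpow_neg hk₀.le,
          show 2 - δ = 1 - δ + 1 by ring, rpow_add_one hT.ne']
        field_simp
end

section
/- Let T > 0, H > 0, let (λ_k)_{k∈ℕ} be real numbers with |λ_k| ≤ C·k^(−(H+1/2)) for all k ≥ 1 and some C > 0, and let (e_k)_{k∈ℕ} be continuous functions ℝ → ℝ that are uniformly bounded (sup_k sup_x |e_k(x)| ≤ M for some M > 0) and uniformly L-Lipschitz (|e_k(x) − e_k(y)| ≤ L·|x − y| for all k, x, y and some L > 0). Let (Z_k)_{k∈ℕ} be a sequence of independent standard Gaussian random variables on a probability space (Ω, ℱ, P). Then for P-almost every ω, the partial sums S_N(t)(ω) := Σ_{k=0}^N λ_k·e_k(kπt/T)·Z_k(ω) converge uniformly on [0,T] as N → ∞ (in particular, the limit is a continuous function of t). -/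
/-!
Cut the series into dyadic blocks `2 ^ j ≤ k < 2 ^ (j + 1)`. At a fixed time, a partial block sum
is a weighted sum of independent standard Gaussians with variance at most `(C M 2 ^ (-H j)) ^ 2`,
hence sub-Gaussian. The tail bound at level `4 (j + 1)` standard deviations, `exp (-8 (j + 1) ^ 2)`,
beats a union bound over the `O(32 ^ j)` choices of block end and of grid point `i T / 16 ^ j`,
so by Borel–Cantelli all these sums are almost surely eventually below that level. Between grid
points the Lipschitz bound on `e k` and `|Z k| ≤ k` (eventually, again by Borel–Cantelli) cost at
most `4 C L π 2 ^ (-j)`. The block bounds are summable, so the partial sums are uniformly Cauchy on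
`[0, T]`, and their uniform limit is continuous.
-/

open MeasureTheory Real Filter Set ProbabilityTheory
open scoped NNReal

namespace ProbabilityTheory

variable {Ω : Type*} [MeasurableSpace Ω] {P : Measure Ω}

lemma hasSubgaussianMGF_of_map_eq_gaussianReal {X : Ω → ℝ} {v : ℝ≥0}
    (hX : P.map X = gaussianReal 0 v) : HasSubgaussianMGF X v P := by
  have : NeZero (P.map X) := by rw [hX]; infer_instance
  rw [← HasSubgaussianMGF.id_map_iff (aemeasurable_of_map_neZero this), hX]
  refine ⟨integrable_exp_mul_gaussianReal, fun t => ?_⟩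
  simp [mgf_id_gaussianReal]

lemma HasSubgaussianMGF.mono {X : Ω → ℝ} {c c' : ℝ≥0} (h : HasSubgaussianMGF X c P)
    (hc : c ≤ c') : HasSubgaussianMGF X c' P :=
  ⟨h.integrable_exp_mul, fun t => (h.mgf_le t).trans <| exp_le_exp.2 <| by gcongr⟩

lemma HasSubgaussianMGF.measure_abs_ge_le [IsFiniteMeasure P] {X : Ω → ℝ} {c : ℝ≥0}
    (h : HasSubgaussianMGF X c P) {ε : ℝ} (hε : 0 ≤ ε) :
    P.real {ω | ε ≤ |X ω|} ≤ 2 * exp (-ε ^ 2 / (2 * c)) := by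
  have hsub : {ω | ε ≤ |X ω|} ⊆ {ω | ε ≤ X ω} ∪ {ω | ε ≤ (-X) ω} := fun ω (hω : ε ≤ |X ω|) =>
    le_abs.1 hω
  calc P.real {ω | ε ≤ |X ω|} ≤ P.real {ω | ε ≤ X ω} + P.real {ω | ε ≤ (-X) ω} :=
        (measureReal_mono hsub).trans (measureReal_union_le _ _)
    _ ≤ exp (-ε ^ 2 / (2 * c)) + exp (-ε ^ 2 / (2 * c)) :=
        add_le_add (h.measure_ge_le hε) (h.neg.measure_ge_le hε)
    _ = 2 * exp (-ε ^ 2 / (2 * c)) := by ring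

lemma hasSubgaussianMGF_sum_mul {ι : Type*} {Z : ι → Ω → ℝ} (hZ : ∀ k, HasSubgaussianMGF (Z k) 1 P)
    (hindep : iIndepFun Z P) (s : Finset ι) (c : ι → ℝ) {v : ℝ≥0}
    (hv : ∑ k ∈ s, c k ^ 2 ≤ v) :
    HasSubgaussianMGF (fun ω => ∑ k ∈ s, c k * Z k ω) v P := by
  have hterm (k : ι) : HasSubgaussianMGF (fun ω => c k * Z k ω) (c k ^ 2).toNNReal P := by
    refine ((hZ k).const_mul (c k)).mono (le_of_eq (NNReal.eq ?_))
    rw [Real.coe_toNNReal _ (sq_nonneg _)]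
    exact mul_one _
  refine (HasSubgaussianMGF.sum_of_iIndepFun
    (hindep.comp (fun k => (c k * ·)) fun k => measurable_const_mul (c k))
    fun k _ => hterm k).mono ?_
  rw [← NNReal.coe_le_coe, NNReal.coe_sum]
  simpa [sq_nonneg] using hv

end ProbabilityTheory

section BorelCantelli

variable {α ι : Type*} [MeasurableSpace α] {μ : Measure α} [IsFiniteMeasure μ]

lemma ae_eventually_notMem_of_summable {s : ℕ → Set α} {p : ℕ → ℝ} (hp : Summable p)
    (hs : ∀ n, μ.real (s n) ≤ p n) : ∀ᵐ x ∂μ, ∀ᶠ n in atTop, x ∉ s n := by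
  refine ae_eventually_notMem (ne_top_of_le_ne_top (ENNReal.ofReal_ne_top (r := ∑' n, p n)) ?_)
  rw [ENNReal.ofReal_tsum_of_nonneg (fun n => measureReal_nonneg.trans (hs n)) hp]
  exact ENNReal.tsum_le_tsum fun n => by
    rw [← ofReal_measureReal]; exact ENNReal.ofReal_le_ofReal (hs n)

lemma ae_eventually_forall_notMem_of_summable (I : ℕ → Finset ι) {A : ℕ → ι → Set α}
    {p : ℕ → ℝ} (hp : Summable fun n => (I n).card * p n)
    (hA : ∀ n, ∀ i ∈ I n, μ.real (A n i) ≤ p n) :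
    ∀ᵐ x ∂μ, ∀ᶠ n in atTop, ∀ i ∈ I n, x ∉ A n i := by
  have := ae_eventually_notMem_of_summable (μ := μ) (s := fun n => ⋃ i ∈ I n, A n i) hp
    fun n => (measureReal_biUnion_finset_le _ _).trans <| by
      simpa using Finset.sum_le_card_nsmul _ _ _ (hA n)
  filter_upwards [this] with x hx
  filter_upwards [hx] with n hn
  simpa using hn

end BorelCantelli

section DyadicBlocks

variable {E : Type*} [SeminormedAddCommGroup E]

lemma norm_sum_Ico_two_pow_le (a : ℕ → E) {b : ℕ → ℝ} (hb : ∀ j, 0 ≤ b j) {j₀ : ℕ}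
    (hblock : ∀ j ≥ j₀, ∀ N ∈ Finset.Icc (2 ^ j) (2 ^ (j + 1)),
      ‖∑ k ∈ Finset.Ico (2 ^ j) N, a k‖ ≤ b j)
    {j : ℕ} (hj : j₀ ≤ j) {N : ℕ} (hN : N ∈ Finset.Icc (2 ^ j₀) (2 ^ (j + 1))) :
    ‖∑ k ∈ Finset.Ico (2 ^ j₀) N, a k‖ ≤ ∑ l ∈ Finset.Ico j₀ (j + 1), b l := by
  induction j, hj using Nat.le_induction generalizing N with
  | base => simpa using hblock j₀ le_rfl N hN
  | succ j hj ih =>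
    rw [Finset.sum_Ico_succ_top (by omega)]
    rw [Finset.mem_Icc] at hN
    rcases le_or_gt N (2 ^ (j + 1)) with hN' | hN'
    · exact (ih (Finset.mem_Icc.2 ⟨hN.1, hN'⟩)).trans (le_add_of_nonneg_right (hb _))
    · have h₀ : 2 ^ j₀ ≤ 2 ^ (j + 1) := Nat.pow_le_pow_right two_pos (by omega)
      rw [← Finset.sum_Ico_consecutive _ h₀ hN'.le]
      exact (norm_add_le _ _).trans <| add_le_add (ih (Finset.mem_Icc.2 ⟨h₀, le_rfl⟩))
        (hblock (j + 1) (by omega) N (Finset.mem_Icc.2 ⟨hN'.le, hN.2⟩))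

lemma sum_Ico_le_tsum_nat_add {b : ℕ → ℝ} (hb : ∀ j, 0 ≤ b j) (hs : Summable b) (m n : ℕ) :
    ∑ l ∈ Finset.Ico m n, b l ≤ ∑' l, b (l + m) := by
  rw [Finset.sum_Ico_eq_sum_range]
  simp_rw [add_comm m]
  exact ((summable_nat_add_iff m).2 hs).sum_le_tsum _ fun l _ => hb _

lemma uniformCauchySeqOn_sum_of_dyadic_blocks {α : Type*} (u : ℕ → α → E) (s : Set α)
    {b : ℕ → ℝ} (hb : ∀ j, 0 ≤ b j) (hs : Summable b)
    (hblock : ∀ᶠ j in atTop, ∀ N ∈ Finset.Icc (2 ^ j) (2 ^ (j + 1)), ∀ t ∈ s,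
      ‖∑ k ∈ Finset.Ico (2 ^ j) N, u k t‖ ≤ b j) :
    UniformCauchySeqOn (fun N t => ∑ k ∈ Finset.range N, u k t) atTop s := by
  rw [Metric.uniformCauchySeqOn_iff]
  intro ε hε
  obtain ⟨J, hJ⟩ := eventually_atTop.1 hblock
  obtain ⟨j₀, hj₀J, hj₀⟩ := ((eventually_ge_atTop J).and
    ((tendsto_sum_nat_add b).eventually (gt_mem_nhds (half_pos hε)))).exists
  have htail : ∀ N ≥ 2 ^ j₀, ∀ t ∈ s,
      ‖∑ k ∈ Finset.range N, u k t - ∑ k ∈ Finset.range (2 ^ j₀), u k t‖ < ε / 2 := by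
    intro N hN t ht
    rw [← Finset.sum_Ico_eq_sub _ hN]
    have hN' : N ∈ Finset.Icc (2 ^ j₀) (2 ^ (max j₀ N + 1)) := Finset.mem_Icc.2
      ⟨hN, (Nat.lt_two_pow_self.trans_le (Nat.pow_le_pow_right two_pos (by omega))).le⟩
    refine lt_of_le_of_lt ?_ hj₀
    refine (norm_sum_Ico_two_pow_le (u · t) hb (fun j hj N hN => hJ j (hj₀J.trans hj) N hN t ht)
      (le_max_left j₀ N) hN').trans ?_
    exact sum_Ico_le_tsum_nat_add hb hs _ _
  refine ⟨2 ^ j₀, fun m hm n hn t ht => ?_⟩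
  calc _ ≤ _ := dist_triangle_right _ _ (∑ k ∈ Finset.range (2 ^ j₀), u k t)
    _ < ε / 2 + ε / 2 := by
      rw [dist_eq_norm, dist_eq_norm]; exact add_lt_add (htail m hm t ht) (htail n hn t ht)
    _ = ε := add_halves ε

end DyadicBlocks

lemma UniformCauchySeqOn.exists_continuousOn_tendstoUniformlyOn {α β : Type*}
    [TopologicalSpace α] [UniformSpace β] [CompleteSpace β] {F : ℕ → α → β} {s : Set α}
    (hF : UniformCauchySeqOn F atTop s) (hc : ∀ n, ContinuousOn (F n) s) :
    ∃ f : α → β, ContinuousOn f s ∧ TendstoUniformlyOn F f atTop s := by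
  have hlim := hF.tendstoUniformlyOn_of_tendsto
    (f := fun t => haveI : Nonempty β := ⟨F 0 t⟩; limUnder atTop (F · t))
    fun t ht => (hF.cauchySeq ht).tendsto_limUnder
  exact ⟨_, hlim.continuousOn (Eventually.of_forall hc).frequently, hlim⟩

lemma exists_nat_le_abs_sub_mul_div_le {T t : ℝ} (hT : 0 < T) (ht : t ∈ Icc 0 T) {n : ℕ}
    (hn : 0 < n) : ∃ i ≤ n, |t - i * T / n| ≤ T / n := by
  set x := t * n / T
  have hx : 0 ≤ x := by have := ht.1; positivity
  have hxn : x ≤ n := by rw [div_le_iff₀ hT]; nlinarith [ht.2, (Nat.cast_nonneg n : (0:ℝ) ≤ n)]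
  refine ⟨⌊x⌋₊, Nat.floor_le_of_le hxn, ?_⟩
  have hsub : t - ⌊x⌋₊ * T / n = T / n * (x - ⌊x⌋₊) := by
    simp only [x]
    field_simp
  rw [hsub, abs_mul, abs_of_pos (by positivity), abs_of_nonneg (sub_nonneg.2 (Nat.floor_le hx))]
  exact mul_le_of_le_one_right (by positivity) (by linarith [Nat.lt_floor_add_one x])

lemma card_Ico_two_pow_le {j N : ℕ} (hN : N ≤ 2 ^ (j + 1)) :
    (Finset.Ico (2 ^ j) N).card ≤ 2 ^ j := by
  rw [Nat.card_Ico]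
  rw [pow_succ] at hN
  omega

lemma abs_mul_sub_mul_le_of_abs_sub_le {T C L t g : ℝ} (hT : 0 < T) (hC : 0 ≤ C) (hL : 0 ≤ L)
    {l z : ℝ} {f : ℝ → ℝ} {j k : ℕ} (hl : |l| ≤ C) (hf : ∀ x y, |f x - f y| ≤ L * |x - y|)
    (hz : |z| ≤ k) (hk : k ≤ 2 ^ (j + 1)) (htg : |t - g| ≤ T / 16 ^ j) :
    |l * f (k * π * t / T) * z - l * f (k * π * g / T) * z| ≤ 4 * C * L * π * (1 / 4) ^ j := by
  have hk' : (k : ℝ) ≤ 2 ^ (j + 1) := by exact_mod_cast hk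
  have hdist : |k * π * t / T - k * π * g / T| ≤ k * π / 16 ^ j := by
    rw [← sub_div, ← mul_sub, abs_div, abs_mul, abs_of_pos hT, abs_of_nonneg (by positivity)]
    calc k * π * |t - g| / T ≤ k * π * (T / 16 ^ j) / T := by gcongr
      _ = k * π / 16 ^ j := by field_simp
  calc |l * f (k * π * t / T) * z - l * f (k * π * g / T) * z|
      = |l| * |f (k * π * t / T) - f (k * π * g / T)| * |z| := by
        rw [← sub_mul, ← mul_sub, abs_mul, abs_mul]
    _ ≤ C * (L * (k * π / 16 ^ j)) * k := by
        gcongr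
        exact (hf _ _).trans (by gcongr)
    _ = C * L * π * k ^ 2 / 16 ^ j := by ring
    _ ≤ C * L * π * (2 ^ (j + 1)) ^ 2 / 16 ^ j := by gcongr
    _ = 4 * C * L * π * (1 / 4) ^ j := by
        rw [show (16 : ℝ) ^ j = 4 ^ j * 4 ^ j by rw [← mul_pow]; norm_num,
          show ((2 : ℝ) ^ (j + 1)) ^ 2 = 4 * 4 ^ j by
            rw [← pow_mul, pow_mul']; norm_num [pow_succ, mul_comm],
          one_div, inv_pow]
        field_simp

lemma abs_sum_Ico_le_of_grid {T C L : ℝ} (hT : 0 < T) (hL : 0 ≤ L) {lam z : ℕ → ℝ}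
    {e : ℕ → ℝ → ℝ} (hlam : ∀ k, 1 ≤ k → |lam k| ≤ C)
    (he_lip : ∀ k x y, |e k x - e k y| ≤ L * |x - y|) {j N : ℕ} (hN : N ≤ 2 ^ (j + 1))
    (hz : ∀ k ∈ Finset.Ico (2 ^ j) N, |z k| ≤ k) {a : ℝ}
    (hgrid : ∀ i ∈ Finset.Iic (16 ^ j : ℕ),
      |∑ k ∈ Finset.Ico (2 ^ j) N, lam k * e k (k * π * (i * T / 16 ^ j) / T) * z k| ≤ a)
    {t : ℝ} (ht : t ∈ Icc 0 T) :
    |∑ k ∈ Finset.Ico (2 ^ j) N, lam k * e k (k * π * t / T) * z k|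
      ≤ a + 4 * C * L * π * (1 / 2) ^ j := by
  obtain ⟨i, hi, hti⟩ := exists_nat_le_abs_sub_mul_div_le hT ht (n := 16 ^ j) (by positivity)
  push_cast at hti
  set g : ℝ := i * T / 16 ^ j
  have hC : 0 ≤ C := (abs_nonneg _).trans (hlam 1 le_rfl)
  have hterm (k : ℕ) (hk : k ∈ Finset.Ico (2 ^ j) N) :=
    abs_mul_sub_mul_le_of_abs_sub_le hT hC hL
      (hlam k (Nat.one_le_two_pow.trans (Finset.mem_Ico.1 hk).1)) (he_lip k) (hz k hk)
      ((Finset.mem_Ico.1 hk).2.le.trans hN) hti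
  have hdiff : |∑ k ∈ Finset.Ico (2 ^ j) N, lam k * e k (k * π * t / T) * z k
      - ∑ k ∈ Finset.Ico (2 ^ j) N, lam k * e k (k * π * g / T) * z k|
        ≤ 4 * C * L * π * (1 / 2) ^ j := by
    rw [← Finset.sum_sub_distrib]
    calc _ ≤ _ := Finset.abs_sum_le_sum_abs _ _
      _ ≤ (Finset.Ico (2 ^ j) N).card * (4 * C * L * π * (1 / 4) ^ j) := by
          simpa using Finset.sum_le_card_nsmul _ _ _ hterm
      _ ≤ 2 ^ j * (4 * C * L * π * (1 / 4) ^ j) := by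
          gcongr
          exact_mod_cast card_Ico_two_pow_le hN
      _ = 4 * C * L * π * (1 / 2) ^ j := by
          rw [show (1 / 2 : ℝ) ^ j = 2 ^ j * (1 / 4) ^ j by rw [← mul_pow]; norm_num]
          ring
  linarith [hgrid i (Finset.mem_Iic.2 hi), abs_sub_abs_le_abs_sub
    (∑ k ∈ Finset.Ico (2 ^ j) N, lam k * e k (k * π * t / T) * z k)
    (∑ k ∈ Finset.Ico (2 ^ j) N, lam k * e k (k * π * g / T) * z k)]

lemma sum_sq_Ico_two_pow_le {H A : ℝ} (hH : 0 ≤ H + 1 / 2) (hA : 0 ≤ A) (c : ℕ → ℝ) {j N : ℕ}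
    (hN : N ≤ 2 ^ (j + 1))
    (hc : ∀ k ∈ Finset.Ico (2 ^ j) N, |c k| ≤ A * (k : ℝ) ^ (-(H + 1 / 2))) :
    ∑ k ∈ Finset.Ico (2 ^ j) N, c k ^ 2 ≤ (A * ((2 : ℝ) ^ (-H)) ^ j) ^ 2 := by
  set x : ℝ := 2 ^ j
  have hx : 0 < x := by positivity
  have hterm : ∀ k ∈ Finset.Ico (2 ^ j) N, c k ^ 2 ≤ (A * x ^ (-(H + 1 / 2))) ^ 2 := by
    intro k hk
    have hxk : x ≤ k := by simpa [x] using (Nat.cast_le (α := ℝ)).2 (Finset.mem_Ico.1 hk).1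
    rw [← sq_abs]
    refine pow_le_pow_left₀ (abs_nonneg _) ((hc k hk).trans ?_) 2
    exact mul_le_mul_of_nonneg_left (rpow_le_rpow_of_nonpos hx hxk (by linarith)) hA
  have hcard : ((Finset.Ico (2 ^ j) N).card : ℝ) ≤ x := by
    simpa [x] using (Nat.cast_le (α := ℝ)).2 (card_Ico_two_pow_le hN)
  calc ∑ k ∈ Finset.Ico (2 ^ j) N, c k ^ 2
      ≤ (Finset.Ico (2 ^ j) N).card * (A * x ^ (-(H + 1 / 2))) ^ 2 := by
        simpa using Finset.sum_le_card_nsmul _ _ _ hterm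
    _ ≤ x * (A * x ^ (-(H + 1 / 2))) ^ 2 := by gcongr
    _ = (A * x ^ (-H)) ^ 2 := by
        rw [show -(H + 1 / 2) = -H + -(1 / 2) by ring, rpow_add hx, rpow_neg hx.le (1 / 2),
          ← sqrt_eq_rpow]
        field_simp
        rw [sq_sqrt hx.le]
        ring
    _ = (A * ((2 : ℝ) ^ (-H)) ^ j) ^ 2 := by
        rw [rpow_pow_comm zero_le_two]

lemma summable_card_dyadic_grid_mul_exp :
    Summable fun j : ℕ => ((Finset.Icc (2 ^ j) (2 ^ (j + 1)) ×ˢ Finset.Iic (16 ^ j)).card : ℝ)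
      * (2 * exp (-8 * ((j : ℝ) + 1) ^ 2)) := by
  refine Summable.of_nonneg_of_le (fun j => by positivity) (fun j => ?_)
    (summable_exp_neg_nat.mul_left 8)
  have hcard : (Finset.Icc (2 ^ j) (2 ^ (j + 1)) ×ˢ Finset.Iic (16 ^ j)).card ≤ 4 * 32 ^ j := by
    rw [Finset.card_product, Nat.card_Icc, Nat.card_Iic, pow_succ,
      show 2 ^ j * 2 + 1 - 2 ^ j = 2 ^ j + 1 by omega,
      show 32 ^ j = 2 ^ j * 16 ^ j by rw [← mul_pow]; norm_num]
    have h₁ := Nat.one_le_two_pow (n := j)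
    have h₂ := Nat.one_le_pow j 16 (by norm_num)
    nlinarith
  have h32 : (32 : ℝ) ^ j ≤ exp (5 * j) := by
    rw [mul_comm, exp_nat_mul]
    gcongr
    calc (32 : ℝ) = 2 ^ 5 := by norm_num
      _ ≤ exp 1 ^ 5 := by gcongr; linarith [add_one_le_exp (1 : ℝ)]
      _ = exp 5 := by rw [← exp_nat_mul]; norm_num
  calc _ ≤ ((4 * 32 ^ j : ℕ) : ℝ) * (2 * exp (-8 * ((j : ℝ) + 1) ^ 2)) := by
        gcongr
    _ ≤ (4 * exp (5 * j)) * (2 * exp (-8 * ((j : ℝ) + 1) ^ 2)) := by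
        push_cast
        gcongr
    _ = 8 * exp (5 * j + -8 * ((j : ℝ) + 1) ^ 2) := by rw [exp_add]; ring
    _ ≤ 8 * exp (-j) := by gcongr; nlinarith

section

variable {Ω : Type*} [MeasurableSpace Ω] {P : Measure Ω} [IsProbabilityMeasure P]

lemma ae_eventually_forall_dyadic_abs_sum_lt {Z : ℕ → Ω → ℝ} (hZ : ∀ k, HasSubgaussianMGF (Z k) 1 P)
    (hindep : iIndepFun Z P) {H A : ℝ} (hH : 0 ≤ H + 1 / 2) (hA : 0 < A)
    (w : ℕ → ℕ → ℕ → ℝ) (hw : ∀ j i k, 2 ^ j ≤ k → |w j i k| ≤ A * (k : ℝ) ^ (-(H + 1 / 2))) :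
    ∀ᵐ ω ∂P, ∀ᶠ j in atTop, ∀ N ∈ Finset.Icc (2 ^ j) (2 ^ (j + 1)), ∀ i ∈ Finset.Iic (16 ^ j),
      |∑ k ∈ Finset.Ico (2 ^ j) N, w j i k * Z k ω| < 4 * (j + 1) * (A * (2 ^ (-H)) ^ j) := by
  have hbound : ∀ j, ∀ p ∈ Finset.Icc (2 ^ j) (2 ^ (j + 1)) ×ˢ Finset.Iic (16 ^ j),
      P.real {ω | 4 * (j + 1) * (A * (2 ^ (-H)) ^ j)
        ≤ |∑ k ∈ Finset.Ico (2 ^ j) p.1, w j p.2 k * Z k ω|}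
        ≤ 2 * exp (-8 * ((j : ℝ) + 1) ^ 2) := by
    rintro j ⟨N, i⟩ hp
    set σ := A * (2 ^ (-H)) ^ j
    have hσ : 0 < σ := by positivity
    have hv : ∑ k ∈ Finset.Ico (2 ^ j) N, w j i k ^ 2 ≤ ((σ ^ 2).toNNReal : ℝ) := by
      rw [Real.coe_toNNReal _ (sq_nonneg _)]
      exact sum_sq_Ico_two_pow_le hH hA.le _ (Finset.mem_Icc.1 (Finset.mem_product.1 hp).1).2
        fun k hk => hw j i k (Finset.mem_Ico.1 hk).1
    have := (hasSubgaussianMGF_sum_mul hZ hindep _ _ hv).measure_abs_ge_le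
      (ε := 4 * (j + 1) * σ) (by positivity)
    rw [Real.coe_toNNReal _ (sq_nonneg _)] at this
    convert this using 4
    field_simp
    ring
  filter_upwards [ae_eventually_forall_notMem_of_summable _ summable_card_dyadic_grid_mul_exp
    hbound] with ω hω
  filter_upwards [hω] with j hj N hN i hi
  exact not_le.1 (hj (N, i) (Finset.mem_product.2 ⟨hN, hi⟩))

lemma ae_eventually_abs_lt_natCast {Z : ℕ → Ω → ℝ} (hZ : ∀ k, HasSubgaussianMGF (Z k) 1 P) :
    ∀ᵐ ω ∂P, ∀ᶠ k in atTop, |Z k ω| < k := by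
  have hbound (k : ℕ) : P.real {ω | (k : ℝ) ≤ |Z k ω|} ≤ 2 * exp (k * (-1 / 2)) := by
    refine ((hZ k).measure_abs_ge_le k.cast_nonneg).trans ?_
    gcongr
    have : (k : ℝ) ≤ k ^ 2 := by exact_mod_cast Nat.le_self_pow two_ne_zero k
    simp only [NNReal.coe_one]
    linarith
  filter_upwards [ae_eventually_notMem_of_summable
    ((summable_exp_nat_mul_iff.2 (by norm_num)).mul_left 2) hbound] with ω hω
  exact hω.mono fun k hk => not_le.1 hk

end

lemma exists_continuousOn_tendstoUniformlyOn_of_grid {T C L : ℝ} (hT : 0 < T) (hL : 0 ≤ L)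
    {lam z : ℕ → ℝ} {e : ℕ → ℝ → ℝ} (hlam : ∀ k, 1 ≤ k → |lam k| ≤ C)
    (he_cont : ∀ k, Continuous (e k)) (he_lip : ∀ k x y, |e k x - e k y| ≤ L * |x - y|)
    {a : ℕ → ℝ} (ha0 : ∀ j, 0 ≤ a j) (ha : Summable a)
    (hgrid : ∀ᶠ j in atTop, ∀ N ∈ Finset.Icc (2 ^ j) (2 ^ (j + 1)),
      ∀ i ∈ Finset.Iic (16 ^ j : ℕ),
        |∑ k ∈ Finset.Ico (2 ^ j) N, lam k * e k (k * π * (i * T / 16 ^ j) / T) * z k| ≤ a j)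
    (hz : ∀ᶠ k in atTop, |z k| ≤ k) :
    ∃ f : ℝ → ℝ, ContinuousOn f (Icc 0 T) ∧
      TendstoUniformlyOn (fun N t => ∑ k ∈ Finset.range (N + 1), lam k * e k (k * π * t / T) * z k)
        f atTop (Icc 0 T) := by
  have hC : 0 ≤ C := (abs_nonneg _).trans (hlam 1 le_rfl)
  obtain ⟨K, hK⟩ := eventually_atTop.1 hz
  have hblock : ∀ᶠ j in atTop, ∀ N ∈ Finset.Icc (2 ^ j) (2 ^ (j + 1)), ∀ t ∈ Icc 0 T,
      ‖∑ k ∈ Finset.Ico (2 ^ j) N, lam k * e k (k * π * t / T) * z k‖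
        ≤ a j + 4 * C * L * π * (1 / 2) ^ j := by
    filter_upwards [hgrid, eventually_ge_atTop K] with j hj hjK N hN t ht
    refine abs_sum_Ico_le_of_grid hT hL hlam he_lip (Finset.mem_Icc.1 hN).2
      (fun k hk => hK k ?_) (hj N hN) ht
    exact hjK.trans (Nat.lt_two_pow_self.le.trans (Finset.mem_Ico.1 hk).1)
  have hUC := uniformCauchySeqOn_sum_of_dyadic_blocks _ _ (fun j => by have := ha0 j; positivity)
    (ha.add ((summable_geometric_two.mul_left (4 * C * L * π)))) hblock
  obtain ⟨f, hf, hlim⟩ := hUC.exists_continuousOn_tendstoUniformlyOn fun N =>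
    (continuous_finsetSum _ fun k _ => by have := he_cont k; fun_prop).continuousOn
  exact ⟨f, hf, tendstoUniformlyOn_iff_seq_tendstoUniformlyOn.1 hlim _ (tendsto_add_atTop_nat 1)⟩

theorem series_converges_uniformly_as_general
    {Ω : Type*} [MeasurableSpace Ω] (P : Measure Ω) [IsProbabilityMeasure P]
    (T H C M L : ℝ) (hT : 0 < T) (hH : 0 < H) (hC : 0 < C) (hM : 0 < M) (hL : 0 < L)
    (lam : ℕ → ℝ) (hlam : ∀ k : ℕ, 1 ≤ k → |lam k| ≤ C * (k : ℝ) ^ (-(H + 1 / 2)))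
    (e : ℕ → ℝ → ℝ) (he_cont : ∀ k, Continuous (e k))
    (he_bdd : ∀ k x, |e k x| ≤ M)
    (he_lip : ∀ k x y, |e k x - e k y| ≤ L * |x - y|)
    (Z : ℕ → Ω → ℝ)
    (hZindep : iIndepFun Z P)
    (hZlaw : ∀ k, P.map (Z k) = gaussianReal 0 1) :
    ∀ᵐ ω ∂P, ∃ f : ℝ → ℝ, ContinuousOn f (Set.Icc 0 T) ∧
      TendstoUniformlyOn
        (fun N t => ∑ k ∈ Finset.range (N + 1), lam k * e k (k * π * t / T) * Z k ω)
        f atTop (Set.Icc 0 T) := by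
  have hZ (k : ℕ) : HasSubgaussianMGF (Z k) 1 P :=
    hasSubgaussianMGF_of_map_eq_gaussianReal (hZlaw k)
  have hlam_le (k : ℕ) (hk : 1 ≤ k) : |lam k| ≤ C :=
    (hlam k hk).trans (mul_le_of_le_one_right hC.le
      (rpow_le_one_of_one_le_of_nonpos (by exact_mod_cast hk) (by linarith)))
  have hr : ‖(2 : ℝ) ^ (-H)‖ < 1 := by
    rw [norm_of_nonneg (by positivity)]
    exact rpow_lt_one_of_one_lt_of_neg one_lt_two (by linarith)
  have ha : Summable fun j : ℕ => 4 * ((j : ℝ) + 1) * (C * M * (2 ^ (-H)) ^ j) :=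
    (((summable_pow_mul_geometric_of_norm_lt_one 1 hr).add
      (summable_geometric_of_norm_lt_one hr)).mul_left (4 * C * M)).congr fun j => by ring
  have hgrid := ae_eventually_forall_dyadic_abs_sum_lt hZ hZindep (H := H) (by linarith)
    (mul_pos hC hM)
    (fun j i k => lam k * e k (k * π * (i * T / 16 ^ j) / T)) fun j i k hk => by
      rw [abs_mul, mul_right_comm C M]
      exact mul_le_mul (hlam k (Nat.one_le_two_pow.trans hk)) (he_bdd k _) (abs_nonneg _)
        (by positivity)
  filter_upwards [hgrid, ae_eventually_abs_lt_natCast hZ] with ω hω hz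
  exact exists_continuousOn_tendstoUniformlyOn_of_grid hT hL.le hlam_le he_cont he_lip
    (fun j => by positivity) ha (hω.mono fun j hj N hN i hi => (hj N hN i hi).le)
    (hz.mono fun k hk => hk.le)

/-- given coefficients `λ_k` with `|λ_k| ≤ C k^(−(H+1/2))`, a uniformly bounded and
uniformly Lipschitz family of continuous functions `e_k`, and independent standard Gaussian
random variables `Z_k`, the partial sums `∑_{k ≤ N} λ_k e_k(kπt/T) Z_k` converge uniformly on
`[0, T]` almost surely, with a continuous limit. -/
theorem series_converges_uniformly_as
    {Ω : Type*} [MeasurableSpace Ω] (P : Measure Ω) [IsProbabilityMeasure P]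
    (T H C M L : ℝ) (hT : 0 < T) (hH : 0 < H) (hC : 0 < C) (hM : 0 < M) (hL : 0 < L)
    (lam : ℕ → ℝ) (hlam : ∀ k : ℕ, 1 ≤ k → |lam k| ≤ C * (k : ℝ) ^ (-(H + 1 / 2)))
    (e : ℕ → ℝ → ℝ) (he_cont : ∀ k, Continuous (e k))
    (he_bdd : ∀ k x, |e k x| ≤ M)
    (he_lip : ∀ k x y, |e k x - e k y| ≤ L * |x - y|)
    (Z : ℕ → Ω → ℝ) (hZmeas : ∀ k, Measurable (Z k))
    (hZindep : iIndepFun Z P)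
    (hZlaw : ∀ k, P.map (Z k) = gaussianReal 0 1) :
    ∀ᵐ ω ∂P, ∃ f : ℝ → ℝ, ContinuousOn f (Set.Icc 0 T) ∧
      TendstoUniformlyOn
        (fun N t => ∑ k ∈ Finset.range (N + 1), lam k * e k (k * π * t / T) * Z k ω)
        f atTop (Set.Icc 0 T) :=
  series_converges_uniformly_as_general P T H C M L hT hH hC hM hL lam hlam e he_cont he_bdd he_lip
    Z hZindep hZlaw
end

section
/- Let T > 0 and H ∈ (0,1) with H ≠ 1/2. Define, for k ≥ 1, c_k := (2/T)·∫₀^T t^(2H)·cos(kπt/T) dt if H < 1/2, and c_k := −(4H(2H−1)T/(kπ)²)·∫₀^T t^(2H−2)·cos(kπt/T) dt if H > 1/2. Then c_k ≤ 0 for all k ≥ 1, and there exists C > 0 such that |c_k| ≤ C·k^(−(2H+1)) for all k ≥ 1. -/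
open MeasureTheory Real Filter Set intervalIntegral Topology

/-!
After the substitution `u = kπt/T` both cases reduce to `∫₀^{kπ} u ^ p cos u`, with
`p = 2H ∈ (0, 1)` or `p = 2H - 2 ∈ (-1, 0)`, times `(kπ/T) ^ (-(p + 1))`. Integration by parts
(the boundary term vanishes because `sin kπ = 0`) turns it into `-p ∫₀^{kπ} u ^ (p - 1) sin u`.
The last integral is an alternating sum of the integrals over the arches `[jπ, (j + 1)π]`, whose
absolute values decrease since `u ^ (p - 1)` does, so it lies between `0` and the first arch,
which is at most `π ^ (p + 1) / (p + 1)`. The sign of `-p` against the prefactor gives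
`c_k ≤ 0`, and the powers of `k` combine to `k ^ (-(2H + 1))`.
-/

theorem alternating_sum_range_mem_Icc {E : Type*} [Ring E] [PartialOrder E] [IsOrderedRing E]
    {a : ℕ → E} (ha : Antitone a) (ha0 : ∀ n, 0 ≤ a n) (k : ℕ) :
    ∑ i ∈ Finset.range k, (-1) ^ i * a i ∈ Icc 0 (a 0) := by
  induction k generalizing a with
  | zero => simpa using ha0 0
  | succ k ih =>
    -- peeling off the first term turns the tail into the alternating sum of the shifted sequence
    obtain ⟨hlo, hhi⟩ := ih (a := fun i ↦ a (i + 1)) (fun i j hij ↦ ha (by omega)) (fun i ↦ ha0 _)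
    simp only [Finset.sum_range_succ', pow_succ, mul_neg_one, neg_mul, Finset.sum_neg_distrib,
      pow_zero, one_mul, neg_add_eq_sub]
    exact ⟨sub_nonneg.2 (hhi.trans (ha (Nat.zero_le _))), sub_le_self _ hlo⟩

theorem rpow_add_one_mul_sinc {x : ℝ} (hx : x ≠ 0) (γ : ℝ) :
    x ^ (γ + 1) * sinc x = x ^ γ * sin x := by
  rw [rpow_add_one hx, sinc_of_ne_zero hx]
  field_simp

theorem intervalIntegrable_rpow_mul_sin {γ : ℝ} (hγ : -2 < γ) (a b : ℝ) :
    IntervalIntegrable (fun u ↦ u ^ γ * sin u) volume a b := by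
  refine ((intervalIntegrable_rpow' (r := γ + 1) (by linarith)).mul_continuousOn
    continuous_sinc.continuousOn).congr_ae ?_
  filter_upwards [ae_restrict_of_ae (Measure.ae_ne volume (0 : ℝ))] with x hx
    using rpow_add_one_mul_sinc hx γ

theorem integral_rpow_mul_cos_eq {p b : ℝ} (hp : -1 < p) (hb : 0 ≤ b) :
    ∫ u in (0 : ℝ)..b, u ^ p * cos u
      = b ^ p * sin b - p * ∫ u in (0 : ℝ)..b, u ^ (p - 1) * sin u := by
  rcases hb.eq_or_lt with rfl | hb
  · simp
  have hderiv : ∀ x ∈ Ioo 0 b, HasDerivAt (fun u ↦ u ^ p * sin u)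
      (p * (x ^ (p - 1) * sin x) + x ^ p * cos x) x := fun x hx ↦
    ((hasDerivAt_rpow_const (Or.inl hx.1.ne')).fun_mul (hasDerivAt_sin x)).congr_deriv (by ring)
  have hsin := (intervalIntegrable_rpow_mul_sin (γ := p - 1) (by linarith) 0 b).const_mul p
  have hcos := (intervalIntegrable_rpow' hp (a := 0) (b := b)).mul_continuousOn
    continuous_cos.continuousOn
  -- near 0 the boundary term is `u ^ (p + 1) * sinc u`, which is continuous since `p + 1 > 0`
  have hlim0 : Tendsto (fun u ↦ u ^ p * sin u) (𝓝[>] 0) (𝓝 0) := by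
    have hcont : ContinuousAt (fun u ↦ u ^ (p + 1) * sinc u) 0 :=
      (continuousAt_rpow_const _ _ (Or.inr (by linarith))).mul continuous_sinc.continuousAt
    have h := hcont.tendsto.mono_left (nhdsWithin_le_nhds (s := Ioi 0))
    rw [zero_rpow (by linarith), zero_mul] at h
    exact h.congr' (eventually_nhdsWithin_of_forall fun u hu ↦ rpow_add_one_mul_sinc hu.ne' p)
  have hlimb : Tendsto (fun u ↦ u ^ p * sin u) (𝓝[<] b) (𝓝 (b ^ p * sin b)) :=
    ((continuousAt_rpow_const _ _ (Or.inl hb.ne')).mul continuous_sin.continuousAt)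
      |>.continuousWithinAt
  have key := integral_eq_sub_of_hasDerivAt_of_tendsto hb hderiv (hsin.add hcos) hlim0 hlimb
  rw [integral_add hsin hcos, intervalIntegral.integral_const_mul] at key
  linarith

/-- The integral of `u ^ γ * sin u` over the arch `[jπ, (j + 1)π]`, up to the sign `(-1) ^ j`. -/
noncomputable def rpowSinArch (γ : ℝ) (j : ℕ) : ℝ :=
  ∫ v in (0 : ℝ)..π, (v + j * π) ^ γ * sin v

theorem rpowSinArch_nonneg (γ : ℝ) (j : ℕ) : 0 ≤ rpowSinArch γ j :=
  integral_nonneg pi_pos.le fun v hv ↦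
    mul_nonneg (rpow_nonneg (add_nonneg hv.1 (by positivity)) _)
      (sin_nonneg_of_nonneg_of_le_pi hv.1 hv.2)

theorem neg_one_pow_mul_rpow_mul_sin_add_nat_mul_pi (γ v : ℝ) (j : ℕ) :
    (-1) ^ j * ((v + j * π) ^ γ * sin (v + j * π)) = (v + j * π) ^ γ * sin v := by
  rw [sin_add_nat_mul_pi, mul_left_comm ((v + j * π) ^ γ), ← mul_assoc, ← mul_pow, neg_one_mul,
    neg_neg, one_pow, one_mul]

theorem integral_rpow_mul_sin_arch (γ : ℝ) (j : ℕ) :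
    ∫ u in j * π..(j + 1) * π, u ^ γ * sin u = (-1) ^ j * rpowSinArch γ j := by
  have h := integral_comp_add_right (fun u ↦ u ^ γ * sin u) (j * π) (a := 0) (b := π)
  rw [zero_add, show π + j * π = (j + 1) * π by ring] at h
  rw [← h, rpowSinArch, ← intervalIntegral.integral_const_mul]
  refine integral_congr fun v _ ↦ ?_
  rw [← neg_one_pow_mul_rpow_mul_sin_add_nat_mul_pi γ v j, ← mul_assoc, ← mul_pow, neg_one_mul,
    neg_neg, one_pow, one_mul]

theorem intervalIntegrable_rpowSinArch_integrand {γ : ℝ} (hγ : -2 < γ) (j : ℕ) :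
    IntervalIntegrable (fun v ↦ (v + j * π) ^ γ * sin v) volume 0 π := by
  have h := ((intervalIntegrable_rpow_mul_sin hγ (j * π) ((j + 1) * π)).comp_add_right
    (j * π)).const_mul ((-1) ^ j)
  rw [sub_self, show (j + 1) * π - j * π = π by ring] at h
  exact h.congr fun v _ ↦ neg_one_pow_mul_rpow_mul_sin_add_nat_mul_pi γ v j

theorem rpowSinArch_antitone {γ : ℝ} (hγ : -2 < γ) (hγ0 : γ ≤ 0) : Antitone (rpowSinArch γ) := by
  refine antitone_nat_of_succ_le fun j ↦ integral_mono_on pi_pos.le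
    (intervalIntegrable_rpowSinArch_integrand hγ (j + 1))
    (intervalIntegrable_rpowSinArch_integrand hγ j) fun v hv ↦ ?_
  rcases hv.1.eq_or_lt with rfl | hv0
  · simp
  · refine mul_le_mul_of_nonneg_right ?_ (sin_nonneg_of_nonneg_of_le_pi hv.1 hv.2)
    exact rpow_le_rpow_of_nonpos (by positivity) (by push_cast; nlinarith [pi_pos]) hγ0

theorem rpowSinArch_zero_le {γ : ℝ} (hγ : -2 < γ) : rpowSinArch γ 0 ≤ π ^ (γ + 2) / (γ + 2) := by
  have hint : ∫ v in (0 : ℝ)..π, v ^ (γ + 1) = π ^ (γ + 2) / (γ + 2) := by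
    rw [integral_rpow (Or.inl (by linarith)), zero_rpow (by linarith), sub_zero]
    ring_nf
  rw [← hint, rpowSinArch]
  simp only [CharP.cast_eq_zero, zero_mul, add_zero]
  refine integral_mono_on pi_pos.le (intervalIntegrable_rpow_mul_sin hγ 0 π)
    (intervalIntegrable_rpow' (by linarith)) fun v hv ↦ ?_
  rcases hv.1.eq_or_lt with rfl | hv0
  · simp [zero_rpow_nonneg]
  · rw [rpow_add_one hv0.ne']
    exact mul_le_mul_of_nonneg_left (sin_le hv0.le) (rpow_nonneg hv0.le γ)

theorem integral_rpow_mul_sin_nat_mul_pi {γ : ℝ} (hγ : -2 < γ) (k : ℕ) :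
    ∫ u in (0 : ℝ)..k * π, u ^ γ * sin u = ∑ j ∈ Finset.range k, (-1) ^ j * rpowSinArch γ j := by
  have h := sum_integral_adjacent_intervals (a := fun j : ℕ ↦ j * π) (n := k)
    (fun j _ ↦ intervalIntegrable_rpow_mul_sin hγ _ _)
  simp only [Nat.cast_zero, zero_mul, Nat.cast_succ] at h
  rw [← h]
  exact Finset.sum_congr rfl fun j _ ↦ integral_rpow_mul_sin_arch γ j

theorem integral_rpow_mul_sin_nat_mul_pi_mem_Icc {γ : ℝ} (hγ : -2 < γ) (hγ0 : γ ≤ 0) (k : ℕ) :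
    ∫ u in (0 : ℝ)..k * π, u ^ γ * sin u ∈ Icc 0 (π ^ (γ + 2) / (γ + 2)) := by
  rw [integral_rpow_mul_sin_nat_mul_pi hγ]
  obtain ⟨hlo, hhi⟩ := alternating_sum_range_mem_Icc (rpowSinArch_antitone hγ hγ0)
    (rpowSinArch_nonneg γ) k
  exact ⟨hlo, hhi.trans (rpowSinArch_zero_le hγ)⟩

theorem integral_rpow_mul_cos_nat_mul_pi {p : ℝ} (hp : p ∈ Ioo (-1) 1) (k : ℕ) :
    ∃ S ∈ Icc 0 (π ^ (p + 1) / (p + 1)), ∫ u in (0 : ℝ)..k * π, u ^ p * cos u = -(p * S) := by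
  refine ⟨∫ u in (0 : ℝ)..k * π, u ^ (p - 1) * sin u, ?_, ?_⟩
  · have h := integral_rpow_mul_sin_nat_mul_pi_mem_Icc (γ := p - 1) (by linarith [hp.1])
      (by linarith [hp.2]) k
    rwa [show p - 1 + 2 = p + 1 by ring] at h
  · rw [integral_rpow_mul_cos_eq hp.1 (by positivity), sin_nat_mul_pi, mul_zero, zero_sub]

theorem integral_rpow_mul_comp_mul (f : ℝ → ℝ) (p : ℝ) {s b : ℝ} (hs : 0 < s) (hb : 0 ≤ b) :
    ∫ t in (0 : ℝ)..b, t ^ p * f (s * t) = s ^ (-(p + 1)) * ∫ u in (0 : ℝ)..s * b, u ^ p * f u := by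
  have hscale : ∀ t ∈ uIcc 0 b, t ^ p * f (s * t) = s ^ (-p) * ((s * t) ^ p * f (s * t)) := by
    intro t ht
    rw [uIcc_of_le hb] at ht
    rw [mul_rpow hs.le ht.1, ← mul_assoc, ← mul_assoc, ← rpow_add hs, neg_add_cancel, rpow_zero,
      one_mul]
  rw [integral_congr hscale, intervalIntegral.integral_const_mul,
    integral_comp_mul_left (fun u ↦ u ^ p * f u) hs.ne', mul_zero, smul_eq_mul, ← mul_assoc,
    neg_add, rpow_add hs, rpow_neg_one]

theorem integral_rpow_mul_cos_nat_mul_pi_div {p T : ℝ} (hp : p ∈ Ioo (-1) 1) (hT : 0 < T) {k : ℕ}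
    (hk : 0 < k) : ∃ S ∈ Icc 0 (π ^ (p + 1) / (p + 1)),
      ∫ t in (0 : ℝ)..T, t ^ p * cos (k * π * t / T)
        = -(p * (π / T) ^ (-(p + 1)) * S * (k : ℝ) ^ (-(p + 1))) := by
  obtain ⟨S, hS, hint⟩ := integral_rpow_mul_cos_nat_mul_pi hp k
  refine ⟨S, hS, ?_⟩
  have hs : 0 < k * π / T := by positivity
  calc ∫ t in (0 : ℝ)..T, t ^ p * cos (k * π * t / T)
      = ∫ t in (0 : ℝ)..T, t ^ p * cos (k * π / T * t) := by simp only [div_mul_eq_mul_div]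
    _ = (k * π / T) ^ (-(p + 1)) * -(p * S) := by
      rw [integral_rpow_mul_comp_mul cos p hs hT.le, div_mul_cancel₀ _ hT.ne', hint]
    _ = -(p * (π / T) ^ (-(p + 1)) * S * (k : ℝ) ^ (-(p + 1))) := by
      rw [mul_div_assoc, mul_rpow (Nat.cast_nonneg k) (by positivity)]
      ring

theorem nonpos_and_abs_le_rpow_of_eq_neg_mul {c : ℕ → ℝ} {K A r : ℝ} (hK : 0 < K) (hA : 0 < A)
    (hc : ∀ k, 1 ≤ k → ∃ S ∈ Icc 0 A, c k = -(K * S * (k : ℝ) ^ (-r))) :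
    (∀ k, 1 ≤ k → c k ≤ 0) ∧ ∃ C > 0, ∀ k, 1 ≤ k → |c k| ≤ C * (k : ℝ) ^ (-r) := by
  have key : ∀ k, 1 ≤ k → c k ≤ 0 ∧ |c k| ≤ K * A * (k : ℝ) ^ (-r) := fun k hk ↦ by
    obtain ⟨S, hS, hck⟩ := hc k hk
    have hprod : 0 ≤ K * S * (k : ℝ) ^ (-r) :=
      mul_nonneg (mul_nonneg hK.le hS.1) (rpow_nonneg (Nat.cast_nonneg k) _)
    rw [hck, abs_neg, abs_of_nonneg hprod]
    exact ⟨neg_nonpos.2 hprod, by gcongr; exact hS.2⟩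
  exact ⟨fun k hk ↦ (key k hk).1, K * A, mul_pos hK hA, fun k hk ↦ (key k hk).2⟩

/-- for `H ∈ (0, 1)`, `H ≠ 1/2`, the coefficients
`c_k = (2/T) ∫₀ᵀ t^{2H} cos(kπt/T) dt` (for `H < 1/2`) and
`c_k = −(4H(2H−1)T/(kπ)²) ∫₀ᵀ t^{2H−2} cos(kπt/T) dt` (for `H > 1/2`) are nonpositive and
satisfy `|c_k| ≤ C k^{−(2H+1)}`. -/
theorem fbm_fourier_coefficients_sign_and_decay
    (T H : ℝ) (hT : 0 < T) (hH : H ∈ Set.Ioo (0 : ℝ) 1) (hH' : H ≠ 1 / 2)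
    (c : ℕ → ℝ)
    (hc : ∀ k : ℕ, 1 ≤ k →
      c k = if H < 1 / 2 then
          (2 / T) * ∫ t in (0 : ℝ)..T, t ^ (2 * H) * Real.cos (k * π * t / T)
        else
          -(4 * H * (2 * H - 1) * T / (k * π) ^ 2) *
            ∫ t in (0 : ℝ)..T, t ^ (2 * H - 2) * Real.cos (k * π * t / T)) :
    (∀ k : ℕ, 1 ≤ k → c k ≤ 0) ∧
    ∃ C > (0 : ℝ), ∀ k : ℕ, 1 ≤ k → |c k| ≤ C * (k : ℝ) ^ (-(2 * H + 1)) := by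
  obtain ⟨hH0, hH1⟩ := hH
  by_cases hlt : H < 1 / 2
  · refine nonpos_and_abs_le_rpow_of_eq_neg_mul
      (K := 2 / T * (2 * H) * (π / T) ^ (-(2 * H + 1))) (A := π ^ (2 * H + 1) / (2 * H + 1))
      (by have := hH0; positivity) (by have := hH0; positivity) fun k hk ↦ ?_
    obtain ⟨S, hS, hint⟩ := integral_rpow_mul_cos_nat_mul_pi_div (p := 2 * H)
      ⟨by linarith, by linarith⟩ hT hk
    refine ⟨S, hS, ?_⟩
    rw [hc k hk, if_pos hlt, hint]
    ring
  · have hgt : 1 / 2 < H := (not_lt.1 hlt).lt_of_ne' hH'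
    refine nonpos_and_abs_le_rpow_of_eq_neg_mul
      (K := 4 * H * (2 * H - 1) * T / π ^ 2 * (2 - 2 * H) * (π / T) ^ (-(2 * H - 2 + 1)))
      (A := π ^ (2 * H - 2 + 1) / (2 * H - 2 + 1)) ?_ ?_ fun k hk ↦ ?_
    · have : 0 < 2 * H - 1 := by linarith
      have : 0 < 2 - 2 * H := by linarith
      positivity
    · have : 0 < 2 * H - 2 + 1 := by linarith
      positivity
    obtain ⟨S, hS, hint⟩ := integral_rpow_mul_cos_nat_mul_pi_div (p := 2 * H - 2)
      ⟨by linarith, by linarith⟩ hT hk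
    refine ⟨S, hS, ?_⟩
    have hk0 : (0 : ℝ) < k := by exact_mod_cast hk
    have hkpow : (k : ℝ) ^ (-(2 * H - 2 + 1)) = (k : ℝ) ^ (-(2 * H + 1)) * (k : ℝ) ^ 2 := by
      rw [← rpow_natCast, ← rpow_add hk0]
      ring_nf
    rw [hc k hk, if_neg hlt, hint, hkpow]
    field_simp
    ring
end

section
/- Let T > 0. Then for all s, t ∈ [0,T], the series Σ_{k=1}^∞ (2T/((k − 1/2)²·π²))·sin((k − 1/2)πt/T)·sin((k − 1/2)πs/T) converges and equals min(s, t). -/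
/-!
Both sides are built from the classical Fourier series
`∑_{n ≥ 1} cos(n x)/n² = π²/6 - π x/2 + x²/4` on `[0, 2π]` (a Bernoulli-polynomial identity).
Subtracting the even-indexed terms leaves `∑_k cos((2k+1) y)/(2k+1)² = π²/8 - π y/4` on `[0, π]`.
Writing `sin α sin β = (cos(α - β) - cos(α + β))/2`, the two resulting linear functions of
`|α - β|` and `α + β` combine to `(α + β - |α - β|)/2 = min α β`.
-/

open Real

theorem hasSum_cos_nat_mul_div_sq {x : ℝ} (hx : x ∈ Set.Icc 0 (2 * π)) :
    HasSum (fun n : ℕ => cos (n * x) / (n : ℝ) ^ 2) (π ^ 2 / 6 - π * x / 2 + x ^ 2 / 4) := by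
  have hx' : x / (2 * π) ∈ Set.Icc (0 : ℝ) 1 :=
    ⟨div_nonneg hx.1 (by positivity), (div_le_one (by positivity)).2 hx.2⟩
  convert hasSum_one_div_nat_pow_mul_cos one_ne_zero hx' using 1
  · funext n
    rw [mul_right_comm, mul_div_cancel₀ _ (by positivity), mul_one, one_div_mul_eq_div, mul_comm x]
  · rw [← bernoulliFun, mul_one, bernoulliFun_two]
    field_simp
    norm_num [Nat.factorial]
    ring

theorem hasSum_cos_odd_mul_div_sq {y : ℝ} (hy : y ∈ Set.Icc 0 π) :
    HasSum (fun k : ℕ => cos ((2 * k + 1) * y) / (2 * k + 1 : ℝ) ^ 2) (π ^ 2 / 8 - π * y / 4) := by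
  have hall := hasSum_cos_nat_mul_div_sq ⟨hy.1, by linarith [hy.2, pi_pos]⟩
  have heven : HasSum (fun k : ℕ => cos (((2 * k : ℕ) : ℝ) * y) / ((2 * k : ℕ) : ℝ) ^ 2)
      ((π ^ 2 / 6 - π * (2 * y) / 2 + (2 * y) ^ 2 / 4) / 4) :=
    ((hasSum_cos_nat_mul_div_sq (x := 2 * y) ⟨by linarith [hy.1], by linarith [hy.2]⟩).div_const
      4).congr_fun fun k => by push_cast; rw [div_div, mul_comm (2 : ℝ), mul_assoc]; ring
  obtain ⟨c, hodd⟩ :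
      Summable fun k : ℕ => cos (((2 * k + 1 : ℕ) : ℝ) * y) / ((2 * k + 1 : ℕ) : ℝ) ^ 2 :=
    hall.summable.comp_injective (i := fun k : ℕ => 2 * k + 1) fun a b h => by simp only at h; omega
  have hsplit := (HasSum.even_add_odd (f := fun n : ℕ => cos (n * y) / (n : ℝ) ^ 2)
    heven hodd).unique hall
  rw [show π ^ 2 / 8 - π * y / 4 = c by linarith]
  exact hodd.congr_fun fun k => by push_cast; ring

theorem hasSum_sin_odd_mul_sin_odd_div_sq {a b : ℝ} (ha : a ∈ Set.Icc 0 (π / 2))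
    (hb : b ∈ Set.Icc 0 (π / 2)) :
    HasSum (fun k : ℕ => sin ((2 * k + 1) * a) * sin ((2 * k + 1) * b) / (2 * k + 1 : ℝ) ^ 2)
      (π / 4 * min a b) := by
  have hdiff := hasSum_cos_odd_mul_div_sq (y := |a - b|) ⟨abs_nonneg _,
    abs_sub_le_iff.2 ⟨by linarith [ha.2, hb.1, pi_pos], by linarith [ha.1, hb.2, pi_pos]⟩⟩
  have hsum := hasSum_cos_odd_mul_div_sq (y := a + b)
    ⟨by linarith [ha.1, hb.1], by linarith [ha.2, hb.2]⟩
  have hmin : π / 4 * min a b =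
      (π ^ 2 / 8 - π * |a - b| / 4 - (π ^ 2 / 8 - π * (a + b) / 4)) / 2 := by
    rcases le_total a b with hab | hab
    · rw [min_eq_left hab, abs_of_nonpos (by linarith)]; ring
    · rw [min_eq_right hab, abs_of_nonneg (by linarith)]; ring
  rw [hmin]
  refine ((hdiff.sub hsum).div_const 2).congr_fun fun k => ?_
  have hk : (0 : ℝ) < 2 * k + 1 := by positivity
  rw [← abs_of_pos hk, ← abs_mul, cos_abs, abs_of_pos hk, ← sub_div, mul_sub, mul_add,
    ← two_mul_sin_mul_sin]
  ring

/-- for all `s, t ∈ [0, T]`, the series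
`∑_{k ≥ 1} (2T/((k − 1/2)² π²)) sin((k − 1/2)πt/T) sin((k − 1/2)πs/T)` converges and its sum is
`min(s, t)` (the covariance of Brownian motion). -/
theorem brownian_motion_kl_series (T : ℝ) (hT : 0 < T) :
    ∀ s ∈ Set.Icc (0 : ℝ) T, ∀ t ∈ Set.Icc (0 : ℝ) T,
      Summable (fun k : ℕ =>
        (2 * T / ((((k : ℝ) + 1) - 1 / 2) ^ 2 * π ^ 2)) *
          Real.sin ((((k : ℝ) + 1) - 1 / 2) * π * t / T) *
          Real.sin ((((k : ℝ) + 1) - 1 / 2) * π * s / T)) ∧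
      (∑' k : ℕ,
        (2 * T / ((((k : ℝ) + 1) - 1 / 2) ^ 2 * π ^ 2)) *
          Real.sin ((((k : ℝ) + 1) - 1 / 2) * π * t / T) *
          Real.sin ((((k : ℝ) + 1) - 1 / 2) * π * s / T)) = min s t := by
  intro s hs t ht
  have hscale : ∀ x ∈ Set.Icc (0 : ℝ) T, π / (2 * T) * x ∈ Set.Icc 0 (π / 2) := fun x hx =>
    ⟨by have := hx.1; positivity, by
      rw [div_mul_eq_mul_div, div_le_div_iff₀ (by positivity) two_pos]
      nlinarith [hx.2, pi_pos]⟩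
  have h := (hasSum_sin_odd_mul_sin_odd_div_sq (hscale t ht) (hscale s hs)).mul_left
    (8 * T / π ^ 2)
  rw [← mul_min_of_nonneg _ _ (by positivity), min_comm,
    show 8 * T / π ^ 2 * (π / 4 * (π / (2 * T) * min s t)) = min s t by field_simp; ring] at h
  have harg : ∀ (k : ℕ) (x : ℝ),
      (2 * k + 1) * (π / (2 * T) * x) = ((k : ℝ) + 1 - 1 / 2) * π * x / T :=
    fun k x => by field_simp; ring
  have hcoeff : ∀ k : ℕ,
      8 * T / π ^ 2 / (2 * k + 1 : ℝ) ^ 2 = 2 * T / (((k : ℝ) + 1 - 1 / 2) ^ 2 * π ^ 2) :=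
    fun k => by rw [show (k : ℝ) + 1 - 1 / 2 = (2 * k + 1) / 2 by ring]; field_simp; ring
  refine ⟨(h.congr_fun fun k => ?_).summable, (h.congr_fun fun k => ?_).tsum_eq⟩ <;>
  · rw [← harg, ← harg, ← hcoeff]
    ring
end

section
/- Let T > 0 and H ∈ (0,1/2). Then for every integer k ≥ 1, ∫₀^T e^(−t^(2H))·cos(kπt/T) dt ≥ 0. -/
/-!
`t ↦ exp(-t^{2H})` is convex and decreasing on `[0, T]`, since `t^{2H}` is concave for `2H ≤ 1`.
Rescaling `t = (T / k) s` reduces the claim to `∫₀ᵏ f(s) cos(πs) ds ≥ 0` for such an `f` on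
`[0, k]`. Reflecting the second half of each period `[j, j + 1]` gives
`∫ⱼ^{j+1} f(s) cos(πs) ds = (-1)ʲ Gⱼ` with `Gⱼ = ∫₀^{1/2} (f(j + u) - f(j + 1 - u)) cos(πu) du`.
Monotonicity of `f` gives `Gⱼ ≥ 0` and convexity gives `Gⱼ₊₁ ≤ Gⱼ`, so the alternating sum
`∑ (-1)ʲ Gⱼ` is nonnegative.
-/

open Real MeasureTheory Set

theorem sum_range_alternating_nonneg {d : ℕ → ℝ} {n : ℕ}
    (hanti : ∀ j, j + 1 < n → d (j + 1) ≤ d j) (hnonneg : ∀ j < n, 0 ≤ d j) :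
    0 ≤ ∑ j ∈ Finset.range n, (-1 : ℝ) ^ j * d j := by
  induction n using Nat.twoStepInduction generalizing d with
  | zero => simp
  | one => simpa using hnonneg 0 one_pos
  | more n ih _ =>
    have htail := ih (d := fun j => d (j + 2)) (fun j _ => hanti (j + 2) (by omega))
      (fun j _ => hnonneg (j + 2) (by omega))
    have hhead := hanti 0 (by omega)
    rw [Finset.sum_range_succ', Finset.sum_range_succ']
    simp only [pow_succ, mul_neg, mul_one, neg_mul, neg_neg, one_mul, pow_zero] at htail ⊢
    linarith

theorem ConvexOn.map_add_sub_map_le {s : Set ℝ} {f : ℝ → ℝ} (hf : ConvexOn ℝ s f) {x y c : ℝ}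
    (hx : x ∈ s) (hyc : y + c ∈ s) (hxy : x ≤ y) (hc : 0 ≤ c) :
    f (x + c) - f x ≤ f (y + c) - f y := by
  rcases (add_nonneg (sub_nonneg.2 hxy) hc).eq_or_lt with hD | hD
  · obtain rfl : c = 0 := by linarith
    simp
  -- `x + c` and `y` are the two convex combinations of `x` and `y + c` with swapped weights.
  set D := y - x + c
  have hab : (y - x) / D + c / D = 1 := by rw [← add_div, div_self hD.ne']
  have h₁ := hf.2 hx hyc (div_nonneg (sub_nonneg.2 hxy) hD.le) (div_nonneg hc hD.le) hab
  have h₂ := hf.2 hx hyc (div_nonneg hc hD.le) (div_nonneg (sub_nonneg.2 hxy) hD.le)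
    (by rwa [add_comm])
  have e₁ : (y - x) / D * x + c / D * (y + c) = x + c := by field_simp; simp only [D]; ring
  have e₂ : c / D * x + (y - x) / D * (y + c) = y := by field_simp; simp only [D]; ring
  simp only [smul_eq_mul, e₁, e₂] at h₁ h₂
  linear_combination h₁ + h₂ + (f x + f (y + c)) * hab

theorem integral_zero_one_mul_cos_pi (g : ℝ → ℝ) (hg : IntervalIntegrable g volume 0 1) :
    ∫ s in (0 : ℝ)..1, g s * cos (π * s) =
      ∫ u in (0 : ℝ)..1 / 2, (g u - g (1 - u)) * cos (π * u) := by
  have hint : ∀ a ∈ Icc (0 : ℝ) 1, ∀ b ∈ Icc (0 : ℝ) 1,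
      IntervalIntegrable (fun s => g s * cos (π * s)) volume a b := fun a ha b hb =>
    (hg.mono_set (uIcc_subset_uIcc (by simpa [uIcc_of_le] using ha)
      (by simpa [uIcc_of_le] using hb))).mul_continuousOn (by fun_prop)
  have hrefl_int : IntervalIntegrable (fun u => g (1 - u) * cos (π * u)) volume 0 (1 / 2) := by
    have := (hg.comp_sub_left 1).symm
    norm_num at this
    exact (this.mono_set (uIcc_subset_uIcc (by simp [uIcc_of_le]) (by norm_num [uIcc_of_le]))
      ).mul_continuousOn (by fun_prop)
  have hrefl : ∫ s in (1 / 2 : ℝ)..1, g s * cos (π * s) =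
      -∫ u in (0 : ℝ)..1 / 2, g (1 - u) * cos (π * u) := by
    have := intervalIntegral.integral_comp_sub_left (fun s => g s * cos (π * s))
      (a := 0) (b := 1 / 2) 1
    norm_num at this
    rw [← intervalIntegral.integral_neg, ← this]
    refine intervalIntegral.integral_congr fun u _ => ?_
    simp only [mul_sub, mul_one, cos_pi_sub]
    ring
  have hhalf : (1 / 2 : ℝ) ∈ Icc 0 1 := by norm_num
  rw [← intervalIntegral.integral_add_adjacent_intervals (b := 1 / 2)
      (hint 0 (by simp) _ hhalf) (hint _ hhalf 1 (by simp)), hrefl, ← sub_eq_add_neg,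
    ← intervalIntegral.integral_sub (hint 0 (by simp) _ hhalf) hrefl_int]
  simp only [sub_mul]

theorem integral_nat_add_mul_cos_pi (f : ℝ → ℝ) (j : ℕ)
    (hf : IntervalIntegrable f volume j (j + 1)) :
    ∫ t in (j : ℝ)..j + 1, f t * cos (π * t) =
      (-1) ^ j * ∫ u in (0 : ℝ)..1 / 2, (f (j + u) - f (j + 1 - u)) * cos (π * u) := by
  have hshift : IntervalIntegrable (fun s => f (j + s)) volume 0 1 := by
    simpa using hf.comp_add_left (j : ℝ)
  have htranslate := intervalIntegral.integral_comp_add_left (fun t => f t * cos (π * t))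
    (a := 0) (b := 1) (j : ℝ)
  simp only [add_zero] at htranslate
  simp_rw [add_sub_assoc]
  rw [← integral_zero_one_mul_cos_pi _ hshift, ← intervalIntegral.integral_const_mul,
    ← htranslate]
  refine intervalIntegral.integral_congr fun s _ => ?_
  rw [show π * (j + s) = π * s + j * π by ring, cos_add_nat_mul_pi]
  ring

theorem integral_mul_cos_pi_nonneg {f : ℝ → ℝ} {n : ℕ} (hconv : ConvexOn ℝ (Icc (0 : ℝ) n) f)
    (hanti : AntitoneOn f (Icc (0 : ℝ) n)) :
    0 ≤ ∫ t in (0 : ℝ)..n, f t * cos (π * t) := by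
  have hmem : ∀ j < n, ∀ t : ℝ, j ≤ t → t ≤ j + 1 → t ∈ Icc (0 : ℝ) n := fun j hj t h₀ h₁ => by
    have : (j : ℝ) + 1 ≤ n := by exact_mod_cast hj
    exact ⟨j.cast_nonneg.trans h₀, h₁.trans this⟩
  have hcos : ∀ u ∈ Icc (0 : ℝ) (1 / 2), 0 ≤ cos (π * u) := fun u hu =>
    cos_nonneg_of_neg_pi_div_two_le_of_le (by nlinarith [pi_pos, hu.1])
      (by nlinarith [pi_pos, hu.2])
  set G : ℕ → ℝ := fun j => ∫ u in (0 : ℝ)..1 / 2, (f (j + u) - f (j + 1 - u)) * cos (π * u)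
  have hG : ∫ t in (0 : ℝ)..n, f t * cos (π * t) = ∑ j ∈ Finset.range n, (-1) ^ j * G j := by
    have hint : ∀ j < n, IntervalIntegrable f volume j (j + 1) := fun j hj =>
      (hanti.mono fun t ht => by
        rw [uIcc_of_le (by linarith)] at ht
        exact hmem j hj t ht.1 ht.2).intervalIntegrable
    have hsum := intervalIntegral.sum_integral_adjacent_intervals (a := fun j : ℕ => (j : ℝ))
      (μ := volume) (f := fun t => f t * cos (π * t)) (n := n) fun j hj => by
        push_cast
        exact (hint j hj).mul_continuousOn (by fun_prop)
    push_cast at hsum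
    rw [← hsum]
    exact Finset.sum_congr rfl fun j hj =>
      integral_nat_add_mul_cos_pi f j (hint j (Finset.mem_range.1 hj))
  have hgap_int : ∀ j < n, IntervalIntegrable
      (fun u => (f (j + u) - f (j + 1 - u)) * cos (π * u)) volume 0 (1 / 2) := by
    refine fun j hj => (AntitoneOn.intervalIntegrable ?_).mul_continuousOn (by fun_prop)
    rw [uIcc_of_le (by norm_num)]
    intro u hu v hv huv
    have h₁ := hanti (hmem j hj _ (by linarith [hu.1]) (by linarith [hu.2]))
      (hmem j hj _ (by linarith [hv.1]) (by linarith [hv.2]))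
      (by linarith : (j : ℝ) + u ≤ j + v)
    have h₂ := hanti (hmem j hj _ (by linarith [hv.2]) (by linarith [hv.1]))
      (hmem j hj _ (by linarith [hu.2]) (by linarith [hu.1]))
      (by linarith : (j : ℝ) + 1 - v ≤ j + 1 - u)
    simp only
    linarith
  rw [hG]
  refine sum_range_alternating_nonneg (fun j hj => ?_) (fun j hj => ?_)
  · refine intervalIntegral.integral_mono_on (by norm_num) (hgap_int (j + 1) hj)
      (hgap_int j (by omega)) fun u hu => mul_le_mul_of_nonneg_right ?_ (hcos u hu)
    have hincr := hconv.map_add_sub_map_le (x := j + u) (y := j + 1 - u) (c := 1)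
      (hmem j (by omega) _ (by linarith [hu.1]) (by linarith [hu.2]))
      (hmem (j + 1) hj _ (by push_cast; linarith [hu.2]) (by push_cast; linarith [hu.1]))
      (by linarith [hu.2]) zero_le_one
    push_cast
    rw [show (j : ℝ) + 1 + u = j + u + 1 by ring,
      show (j : ℝ) + 1 + 1 - u = j + 1 - u + 1 by ring]
    linarith
  · refine intervalIntegral.integral_nonneg (by norm_num) fun u hu => mul_nonneg ?_ (hcos u hu)
    exact sub_nonneg.2 (hanti (hmem j hj _ (by linarith [hu.1]) (by linarith [hu.2]))
      (hmem j hj _ (by linarith [hu.2]) (by linarith [hu.1])) (by linarith [hu.2]))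

theorem ConvexOn.integral_mul_cos_nonneg {f : ℝ → ℝ} {T : ℝ} (hT : 0 < T)
    (hconv : ConvexOn ℝ (Icc 0 T) f) (hanti : AntitoneOn f (Icc 0 T)) {k : ℕ} (hk : k ≠ 0) :
    0 ≤ ∫ t in (0 : ℝ)..T, f t * cos (k * π * t / T) := by
  set c := T / k
  have hc : 0 < c := div_pos hT (by positivity)
  have hck : c * k = T := div_mul_cancel₀ T (by positivity)
  have hmaps : ∀ s ∈ Icc (0 : ℝ) k, c * s ∈ Icc 0 T := fun s hs =>
    ⟨mul_nonneg hc.le hs.1, hck ▸ mul_le_mul_of_nonneg_left hs.2 hc.le⟩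
  have hscale : ∫ t in (0 : ℝ)..T, f t * cos (k * π * t / T) =
      c * ∫ s in (0 : ℝ)..k, f (c * s) * cos (π * s) := by
    have hcos : ∀ s : ℝ, cos (π * s) = cos (k * π * (c * s) / T) := fun s => by
      simp only [c]
      field_simp
    simp_rw [hcos]
    rw [← smul_eq_mul c, intervalIntegral.smul_integral_comp_mul_left
      (fun t => f t * cos (k * π * t / T)), mul_zero, hck]
  rw [hscale]
  refine mul_nonneg hc.le (integral_mul_cos_pi_nonneg ?_ ?_)
  · refine ⟨convex_Icc (0 : ℝ) k, fun x hx y hy a b ha hb hab => ?_⟩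
    simpa only [smul_eq_mul, mul_add, mul_left_comm c] using
      hconv.2 (hmaps x hx) (hmaps y hy) ha hb hab
  · exact fun x hx y hy hxy =>
      hanti (hmaps x hx) (hmaps y hy) (mul_le_mul_of_nonneg_left hxy hc.le)

theorem convexOn_exp_neg_rpow {p : ℝ} (hp₀ : 0 ≤ p) (hp₁ : p ≤ 1) :
    ConvexOn ℝ (Ici 0) fun t : ℝ => exp (-t ^ p) := by
  refine ⟨convex_Ici 0, fun x hx y hy a b ha hb hab => ?_⟩
  calc exp (-(a • x + b • y) ^ p) ≤ exp (a • -x ^ p + b • -y ^ p) :=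
        exp_le_exp.2 ((concaveOn_rpow hp₀ hp₁).neg.2 hx hy ha hb hab)
    _ ≤ a • exp (-x ^ p) + b • exp (-y ^ p) := convexOn_exp.2 trivial trivial ha hb hab

theorem antitoneOn_exp_neg_rpow {p : ℝ} (hp : 0 ≤ p) :
    AntitoneOn (fun t : ℝ => exp (-t ^ p)) (Ici 0) := fun _ hx _ _ hxy =>
  exp_le_exp.2 (neg_le_neg (rpow_le_rpow hx hxy hp))

/-- for `T > 0` and `H ∈ (0, 1/2)`, the Fourier cosine coefficients of the
fractional Ornstein-Uhlenbeck covariance `t ↦ e^{−t^{2H}}` are nonnegative: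
`∫₀ᵀ e^{−t^{2H}} cos(kπt/T) dt ≥ 0` for every `k ≥ 1`. -/
theorem fou_fourier_coefficients_nonneg
    (T H : ℝ) (hT : 0 < T) (hH : H ∈ Set.Ioo (0 : ℝ) (1 / 2)) :
    ∀ k : ℕ, 1 ≤ k →
      0 ≤ ∫ t in (0 : ℝ)..T, Real.exp (-(t ^ (2 * H))) * Real.cos (k * π * t / T) := by
  intro k hk
  have hp₀ : 0 ≤ 2 * H := by linarith [hH.1]
  have hp₁ : 2 * H ≤ 1 := by linarith [hH.2]
  exact ((convexOn_exp_neg_rpow hp₀ hp₁).subset Icc_subset_Ici_self (convex_Icc 0 T)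
    ).integral_mul_cos_nonneg hT ((antitoneOn_exp_neg_rpow hp₀).mono Icc_subset_Ici_self)
    (by omega)
end
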